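/- arXiv:1611.03535 — 7 statements merged into one kernel-verified Lean document; each statement's English description precedes it below -/
import Mathlib

section
/- The formula with reversal φ₁ = x y₁ x · ȳ₁ is 3-unavoidable: there are only finitely many finite words over a 3-letter alphabet that avoid φ₁. -/
/-- A word `w` *encounters* the formula with reversal
`φ_k = x y₁ ⋯ y_k x · ȳ₁ · ⋯ · ȳ_k` if there are nonempty words `X, Y₁, …, Y_k`
such that `X Y₁ ⋯ Y_k X` is a factor of `w` and each reversed `Yᵢ` is a factor of `w`. -/
def Encounters {A : Type*} (k : ℕ) (w : List A) : Prop :=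
  ∃ (X : List A) (Ys : List (List A)),
    Ys.length = k ∧ X ≠ [] ∧ (∀ Y ∈ Ys, Y ≠ []) ∧
    (X ++ Ys.flatten ++ X) <:+: w ∧ (∀ Y ∈ Ys, Y.reverse <:+: w)

/-- A word avoids the formula with reversal `φ_k`. -/
def Avoids {A : Type*} (k : ℕ) (w : List A) : Prop := ¬ Encounters k w

/-- A word is square-free if it has no factor `u ++ u` with `u` nonempty. -/
def SquareFree {A : Type*} (w : List A) : Prop :=
  ∀ u : List A, u ≠ [] → ¬ (u ++ u) <:+: w

/-- Auxiliary function building the `m`-cyclic `w`-word starting at block index `i`. -/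
def cyclicWordFrom {A : Type*} (m : ℕ) (a : ℕ → A) : ℕ → List ℕ → List A
  | _, [] => []
  | i, x :: xs => List.replicate x (a (i % m)) ++ cyclicWordFrom m a (i + 1) xs

/-- The `m`-cyclic `w`-word `C_m(w)` on letters `a 0, …, a (m-1)`:
`(a 0)^{w₁} (a 1)^{w₂} ⋯ (a (m-1))^{w_m} (a 0)^{w_{m+1}} ⋯`. -/
def cyclicWord {A : Type*} (m : ℕ) (a : ℕ → A) (w : List ℕ) : List A :=
  cyclicWordFrom m a 0 w

/-- `w` (a word over `{1,…,k+1}`) contains a forbidden `(k,m)`-factor: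
a factor `x' α₁ ⋯ α_j x''` with `1 ≤ j ≤ k`, each `αᵢ` a letter of `{1,…,k+1}`,
`α₁+⋯+α_j ≥ k`, `|x'| = |x''| = n ≡ m - j (mod m)`, `x'₁ ≥ x''₁`, `x'ₙ ≤ x''ₙ`, and
`x'ᵢ = x''ᵢ` for `i ∈ {2,…,n-1}` (1-indexed). -/
def ForbiddenFactor (k m : ℕ) (w : List ℕ) : Prop :=
  ∃ x' α x'' : List ℕ,
    (x' ++ α ++ x'') <:+: w ∧
    1 ≤ α.length ∧ α.length ≤ k ∧
    (∀ c ∈ α, 1 ≤ c ∧ c ≤ k + 1) ∧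
    k ≤ α.sum ∧
    x'.length = x''.length ∧
    x'.length % m = (m - α.length) % m ∧
    x''.getD 0 0 ≤ x'.getD 0 0 ∧
    x'.getD (x'.length - 1) 0 ≤ x''.getD (x''.length - 1) 0 ∧
    ∀ i, 0 < i → i < x'.length - 1 → x'.getD i 0 = x''.getD i 0

/-- The 8-uniform morphism `f` with `f(0)=11112122`, `f(1)=12112222`, `f(2)=21111222`. -/
def fMorph (v : List ℕ) : List ℕ :=
  v.flatMap fun c =>
    if c = 0 then [1,1,1,1,2,1,2,2]
    else if c = 1 then [1,2,1,1,2,2,2,2]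
    else [2,1,1,1,1,2,2,2]

/-- Image of a letter under the morphism `ρ` with `ρ(1)=22`, `ρ(2)=21`. -/
def rhoLetter (c : ℕ) : List ℕ := if c = 1 then [2,2] else [2,1]

/-- The morphism `ρ : {1,2}* → {1,2}*` with `ρ(1)=22`, `ρ(2)=21`. -/
def rhoWord (v : List ℕ) : List ℕ := v.flatMap rhoLetter

/-- The morphism `d_k` with `d_k(i) = i^{k+1}` for `i ∈ {0,1,2}`. -/
def dMorph (k : ℕ) (w : List ℕ) : List ℕ := w.flatMap fun i => List.replicate (k + 1) i

/-- The morphism `g` with `g(i) = i·a·b`, where the letters `a, b` are coded `3, 4`. -/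
def gMorph (w : List ℕ) : List ℕ := w.flatMap fun i => [i, 3, 4]

/-- The morphism `g'` with `g'(i) = i·a·b·c·d`, where `a,b,c,d` are coded `3,4,5,6`. -/
def g'Morph (w : List ℕ) : List ℕ := w.flatMap fun i => [i, 3, 4, 5, 6]

/-- Insert the letter `c` after every `t` letters of `l`. -/
def insertEvery {A : Type*} (c : A) (t : ℕ) (l : List A) : List A :=
  if _h : l.length ≤ t ∨ t = 0 then l
  else l.take t ++ c :: insertEvery c t (l.drop t)
termination_by l.length
decreasing_by
  simp only [List.length_drop]
  omega

/-- `φ_k` is `n`-avoidable: infinitely many finite words over an `n`-letter alphabet avoid it. -/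
def IsNAvoidable (k n : ℕ) : Prop := {w : List (Fin n) | Avoids k w}.Infinite


/-! Avoiding `φ₁` is closed under taking factors, so every avoiding word of length `n + 1` is a
one-letter right extension of an avoiding word of length `n`. Growing words letter by letter and
discarding any word with a suffix `X Y X` whose `Y` occurs reversed in it, a finite search over
three letters dies out at length 15 (the longest survivors have length 14). -/

section

variable {A : Type*}

theorem Encounters.of_infix {k : ℕ} {v w : List A} (hvw : v <:+: w) (hv : Encounters k v) :
    Encounters k w := by
  obtain ⟨X, Ys, hlen, hX, hYs, hXYX, hrev⟩ := hv
  exact ⟨X, Ys, hlen, hX, hYs, hXYX.trans hvw, fun Y hY => (hrev Y hY).trans hvw⟩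

theorem Avoids.of_infix {k : ℕ} {v w : List A} (hvw : v <:+: w) (hw : Avoids k w) :
    Avoids k v :=
  fun hv => hw (hv.of_infix hvw)

variable [DecidableEq A]

def hasEncounterSuffix (w : List A) : Bool :=
  w.tails.any fun f => (List.range f.length).any fun p =>
    let X := f.take p
    let Y := (f.drop p).take (f.length - 2 * p)
    decide (X ≠ [] ∧ Y ≠ [] ∧ f = X ++ Y ++ X ∧ Y.reverse <:+: w)

theorem encounters_one_of_hasEncounterSuffix {w : List A} (h : hasEncounterSuffix w) :
    Encounters 1 w := by
  simp only [hasEncounterSuffix, List.any_eq_true, decide_eq_true_eq] at h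
  obtain ⟨f, hf, p, -, hX, hY, hXYX, hrev⟩ := h
  refine ⟨_, [_], rfl, hX, by simpa only [List.mem_singleton, forall_eq] using hY, ?_,
    by simpa only [List.mem_singleton, forall_eq] using hrev⟩
  rw [List.flatten_singleton, ← hXYX]
  exact ((List.mem_tails _ _).mp hf).isInfix

def avoidersOfLength (letters : List A) : ℕ → List (List A)
  | 0 => [[]]
  | n + 1 => (avoidersOfLength letters n).flatMap fun w =>
      (letters.map (w ++ [·])).filter fun v => !hasEncounterSuffix v

theorem mem_avoidersOfLength {letters : List A} (hletters : ∀ c, c ∈ letters) {w : List A}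
    (hw : Avoids 1 w) : w ∈ avoidersOfLength letters w.length := by
  induction w using List.reverseRecOn with
  | nil => simp [avoidersOfLength]
  | append_singleton v c ih =>
    have hv : v ∈ avoidersOfLength letters v.length :=
      ih (hw.of_infix (v.prefix_append [c]).isInfix)
    have hvc : hasEncounterSuffix (v ++ [c]) = false :=
      Bool.eq_false_iff.mpr fun h => hw (encounters_one_of_hasEncounterSuffix h)
    simp only [List.length_append, List.length_singleton, avoidersOfLength, List.mem_flatMap,
      List.mem_filter, List.mem_map]
    exact ⟨v, hv, ⟨c, hletters c, rfl⟩, by simp [hvc]⟩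

end

set_option maxHeartbeats 1000000 in
theorem avoidersOfLength_fin_three_fifteen :
    avoidersOfLength ([0, 1, 2] : List (Fin 3)) 15 = [] := by
  decide

theorem length_lt_fifteen_of_avoids {w : List (Fin 3)} (hw : Avoids 1 w) : w.length < 15 := by
  by_contra! hlen
  have hmem := mem_avoidersOfLength (letters := [0, 1, 2]) (by decide)
    (hw.of_infix (w.take_prefix 15).isInfix)
  rw [List.length_take_of_le hlen, avoidersOfLength_fin_three_fifteen] at hmem
  exact List.not_mem_nil hmem

/-- `φ₁` is 3-unavoidable: only finitely many words over a 3-letter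
alphabet avoid `φ₁`. -/
theorem phi_one_three_unavoidable : {w : List (Fin 3) | Avoids 1 w}.Finite :=
  (List.finite_length_lt (Fin 3) 15).subset fun _ => length_lt_fifteen_of_avoids
end

section
/- Let f : {0,1,2}* → {1,2}* be the 8-uniform morphism defined by f(0) = 11112122, f(1) = 12112222, f(2) = 21111222. If v ∈ {0,1,2}* is square-free, then f(v) contains no forbidden (1,4)-factor; that is, f(v) has no factor of the form x' α x'' where α is a single letter, |x'| = |x''| = n with n ≡ 3 (mod 4), and writing x' = x'₁⋯x'ₙ and x'' = x''₁⋯x''ₙ one has x'₁ ≥ x''₁, x'ₙ ≤ x''ₙ, and x'_i = x''_i for all i ∈ {2,…,n−1}. -/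
/-! A forbidden `(1,4)`-factor `x' α x''` with `|x'| = n` makes `f(v)` agree with its shift by
`d = n + 1 ≡ 0 (mod 4)` on a window of length `n - 2`. Column 2 of every block of `f(v)` is `1` and
column 6 is `2`, so no window of length `8` agrees with a shift `d ≡ 4 (mod 8)`. This leaves
`n = 3`, a finite check on two consecutive blocks, and `d = 8e`. In the last case each block is
determined by its columns 0,1 and also by its columns 4,5; every block from the window's start on
has one of these pairs inside the window, so `e` consecutive letters of `v` repeat at distance `e`,
a square. -/

namespace List

variable {α β : Type*}

theorem getD_append_append_length_add (s u t : List α) (d : α) {i : ℕ} (hi : i < u.length) :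
    (s ++ u ++ t).getD (s.length + i) d = u.getD i d := by
  rw [append_assoc, getD_append_right _ _ _ _ (by omega), Nat.add_sub_cancel_left,
    getD_append _ _ _ _ hi]

theorem getD_le_of_forall_mem_le {v : List ℕ} {m : ℕ} (hv : ∀ c ∈ v, c ≤ m) (i : ℕ) :
    v.getD i 0 ≤ m := by
  rcases lt_or_ge i v.length with hi | hi
  · rw [getD_eq_getElem _ _ hi]
    exact hv _ (getElem_mem hi)
  · rw [getD_eq_default _ _ hi]
    exact Nat.zero_le m

theorem getD_flatMap_mul_add {f : α → List β} {L : ℕ} (hf : ∀ a, (f a).length = L)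
    {v : List α} {b o : ℕ} (hb : b < v.length) (ho : o < L) (a₀ : α) (d : β) :
    (v.flatMap f).getD (L * b + o) d = (f (v.getD b a₀)).getD o d := by
  induction v generalizing b with
  | nil => simp at hb
  | cons a v ih =>
    rw [flatMap_cons]
    cases b with
    | zero => simpa using getD_append _ _ d o (by rw [hf]; exact ho)
    | succ b =>
      rw [getD_append_right _ _ _ _ (by rw [hf]; nlinarith), hf,
        show L * (b + 1) + o - L = L * b + o by rw [Nat.mul_succ]; omega,
        ih (by simpa using hb)]
      rfl

theorem exists_square_infix_of_getD_eq {v : List α} {a e : ℕ} (d : α)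
    (hlen : a + 2 * e ≤ v.length) (h : ∀ j < e, v.getD (a + j) d = v.getD (a + j + e) d) :
    ∃ u : List α, u.length = e ∧ u ++ u <:+: v := by
  have hsecond : (v.drop a).take e = ((v.drop a).drop e).take e := by
    apply ext_getElem
    · simp only [length_take, length_drop]; omega
    · intro j hj _
      have hje : j < e := by simp only [length_take] at hj; omega
      have := h j hje
      rw [getD_eq_getElem _ _ (by omega), getD_eq_getElem _ _ (by omega)] at this
      simp only [getElem_take, getElem_drop, ← Nat.add_assoc, this]
      congr 1
      omega
  refine ⟨(v.drop a).take e, by simp only [length_take, length_drop]; omega, ?_⟩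
  nth_rw 2 [hsecond]
  rw [← take_add]
  exact (take_prefix _ _).isInfix.trans (drop_suffix a v).isInfix

end List

def fWord (c : ℕ) : List ℕ :=
  if c = 0 then [1,1,1,1,2,1,2,2]
  else if c = 1 then [1,2,1,1,2,2,2,2]
  else [2,1,1,1,1,2,2,2]

theorem length_fWord (c : ℕ) : (fWord c).length = 8 := by
  unfold fWord; split_ifs <;> rfl

theorem getD_fWord_two (c : ℕ) : (fWord c).getD 2 0 = 1 := by
  unfold fWord; split_ifs <;> rfl

theorem getD_fWord_six (c : ℕ) : (fWord c).getD 6 0 = 2 := by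
  unfold fWord; split_ifs <;> rfl

theorem eq_of_getD_fWord_eq {c c' o : ℕ} (hc : c ≤ 2) (hc' : c' ≤ 2) (ho : o = 0 ∨ o = 4)
    (h : (fWord c).getD o 0 = (fWord c').getD o 0)
    (h' : (fWord c).getD (o + 1) 0 = (fWord c').getD (o + 1) 0) : c = c' := by
  rcases ho with rfl | rfl <;> interval_cases c <;> interval_cases c' <;> simp_all [fWord]

theorem length_fMorph (v : List ℕ) : (fMorph v).length = 8 * v.length := by
  simp [fMorph, apply_ite List.length, mul_comm]

theorem ForbiddenFactor.exists_shift {W : List ℕ} (h : ForbiddenFactor 1 4 W) :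
    ∃ p n, n % 4 = 3 ∧ p + 2 * n + 1 ≤ W.length ∧
      W.getD (p + n + 1) 0 ≤ W.getD p 0 ∧ W.getD (p + n - 1) 0 ≤ W.getD (p + 2 * n) 0 ∧
      ∀ q, p < q → q < p + n - 1 → W.getD q 0 = W.getD (q + (n + 1)) 0 := by
  obtain ⟨x', α, x'', ⟨s, t, hW⟩, hα, hα', -, -, hlen, hmod, hfirst, hlast, hmid⟩ := h
  obtain ⟨a, rfl⟩ := List.length_eq_one_iff.mp (le_antisymm hα' hα)
  subst hW
  set n := x'.length
  have hleft {i q} (hi : i < n) (hq : q = s.length + i) :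
      (s ++ (x' ++ [a] ++ x'') ++ t).getD q 0 = x'.getD i 0 := by
    rw [hq, List.getD_append_append_length_add _ _ _ _ (by simp; omega), List.append_assoc,
      List.getD_append _ _ _ _ hi]
  have hright {i q} (hi : i < n) (hq : q = s.length + (n + 1 + i)) :
      (s ++ (x' ++ [a] ++ x'') ++ t).getD q 0 = x''.getD i 0 := by
    rw [hq, List.getD_append_append_length_add _ _ _ _ (by simp; omega),
      List.getD_append_right _ _ _ _ (by simp; omega)]
    simp [n]
  refine ⟨s.length, n, by simpa using hmod, by simp; omega, ?_, ?_, fun q hq hq' => ?_⟩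
  · rwa [hleft (q := s.length) (i := 0) (by omega) (by omega),
      hright (i := 0) (by omega) (by omega)]
  · rw [hleft (i := n - 1) (by omega) (by omega), hright (i := n - 1) (by omega) (by omega)]
    rwa [hlen] at hlast ⊢
  · rw [hleft (i := q - s.length) (by omega) (by omega),
      hright (i := q - s.length) (by omega) (by omega)]
    exact hmid _ (by omega) (by omega)

section

variable {v : List ℕ}

theorem getD_fMorph {b o : ℕ} (hb : b < v.length) (ho : o < 8) :
    (fMorph v).getD (8 * b + o) 0 = (fWord (v.getD b 0)).getD o 0 :=
  List.getD_flatMap_mul_add length_fWord hb ho 0 0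

theorem getD_fMorph_of_lt_sixteen {b o : ℕ} (ho : o < 16) (h : 8 * b + o < 8 * v.length) :
    (fMorph v).getD (8 * b + o) 0 = (fWord (v.getD b 0) ++ fWord (v.getD (b + 1) 0)).getD o 0 := by
  rcases lt_or_ge o 8 with ho8 | ho8
  · rw [getD_fMorph (by omega) ho8, List.getD_append _ _ _ _ (by rw [length_fWord]; exact ho8)]
  · rw [show 8 * b + o = 8 * (b + 1) + (o - 8) by omega, getD_fMorph (by omega) (by omega),
      List.getD_append_right _ _ _ _ (by rw [length_fWord]; exact ho8), length_fWord]

-- A forbidden factor with `n = 3`, read inside two consecutive blocks.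
theorem fWord_append_fWord_no_short_pattern : ∀ c < 3, ∀ c' < 3, ∀ r < 8,
    let u := fWord c ++ fWord c'
    ¬ (u.getD (r + 4) 0 ≤ u.getD r 0 ∧ u.getD (r + 1) 0 = u.getD (r + 5) 0 ∧
      u.getD (r + 2) 0 ≤ u.getD (r + 6) 0) := by
  decide

theorem fMorph_no_short_pattern (hv : ∀ c ∈ v, c ≤ 2) {p : ℕ} (hp : p + 7 ≤ 8 * v.length) :
    ¬ ((fMorph v).getD (p + 4) 0 ≤ (fMorph v).getD p 0 ∧
      (fMorph v).getD (p + 1) 0 = (fMorph v).getD (p + 5) 0 ∧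
      (fMorph v).getD (p + 2) 0 ≤ (fMorph v).getD (p + 6) 0) := by
  have hwindow (k) (hk : k ≤ 6) : (fMorph v).getD (p + k) 0 =
      (fWord (v.getD (p / 8) 0) ++ fWord (v.getD (p / 8 + 1) 0)).getD (p % 8 + k) 0 := by
    rw [show p + k = 8 * (p / 8) + (p % 8 + k) by omega]
    exact getD_fMorph_of_lt_sixteen (by omega) (by omega)
  have hstart := hwindow 0 (by omega)
  rw [add_zero, add_zero] at hstart
  rw [hstart, hwindow 1 (by omega), hwindow 2 (by omega), hwindow 4 (by omega),
    hwindow 5 (by omega), hwindow 6 (by omega)]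
  have hc := List.getD_le_of_forall_mem_le hv (p / 8)
  have hc' := List.getD_le_of_forall_mem_le hv (p / 8 + 1)
  exact fWord_append_fWord_no_short_pattern _ (by omega) _ (by omega) _ (Nat.mod_lt _ (by norm_num))

theorem fMorph_not_periodic_of_mod_eight_eq_four {lo d : ℕ} (hd : d % 8 = 4)
    (hlen : lo + 8 + d ≤ 8 * v.length) :
    ¬ ∀ q, lo ≤ q → q < lo + 8 → (fMorph v).getD q 0 = (fMorph v).getD (q + d) 0 := by
  intro h
  set q := lo + (10 - lo % 8) % 8
  have hq := h q (by omega) (by omega)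
  rw [show q = 8 * (q / 8) + 2 by omega,
    show 8 * (q / 8) + 2 + d = 8 * (q / 8 + d / 8) + 6 by omega,
    getD_fMorph (by omega) (by omega), getD_fMorph (by omega) (by omega), getD_fWord_two,
    getD_fWord_six] at hq
  exact absurd hq (by norm_num)

theorem getD_eq_getD_add_of_fMorph (hv : ∀ c ∈ v, c ≤ 2) {b e o : ℕ} (ho : o = 0 ∨ o = 4)
    (hb : b + e < v.length)
    (h : (fMorph v).getD (8 * b + o) 0 = (fMorph v).getD (8 * b + o + 8 * e) 0)
    (h' : (fMorph v).getD (8 * b + o + 1) 0 = (fMorph v).getD (8 * b + o + 1 + 8 * e) 0) :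
    v.getD b 0 = v.getD (b + e) 0 := by
  rw [show 8 * b + o + 8 * e = 8 * (b + e) + o by ring, getD_fMorph (by omega) (by omega),
    getD_fMorph (by omega) (by omega)] at h
  rw [show 8 * b + o + 1 + 8 * e = 8 * (b + e) + (o + 1) by ring, add_assoc,
    getD_fMorph (by omega) (by omega), getD_fMorph (by omega) (by omega)] at h'
  exact eq_of_getD_fWord_eq (List.getD_le_of_forall_mem_le hv b)
    (List.getD_le_of_forall_mem_le hv (b + e)) ho h h'

theorem not_squareFree_of_fMorph_periodic (hv : ∀ c ∈ v, c ≤ 2) {lo e : ℕ} (he : 0 < e)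
    (hlen : lo + 16 * e - 3 ≤ 8 * v.length)
    (h : ∀ q, lo ≤ q → q < lo + 8 * e - 3 →
      (fMorph v).getD q 0 = (fMorph v).getD (q + 8 * e) 0) :
    ¬ SquareFree v := by
  set a := (lo + 3) / 8
  have hsync (j) (hj : j < e) : v.getD (a + j) 0 = v.getD (a + j + e) 0 := by
    set o := if lo ≤ 8 * (a + j) then 0 else 4
    have ho : o = 0 ∨ o = 4 := by unfold o; split_ifs <;> simp
    have hwin : lo ≤ 8 * (a + j) + o ∧ 8 * (a + j) + o + 1 < lo + 8 * e - 3 := by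
      unfold o; split_ifs <;> omega
    exact getD_eq_getD_add_of_fMorph hv ho (by omega) (h _ (by omega) (by omega))
      (h _ (by omega) (by omega))
  obtain ⟨u, hu, hsq⟩ := List.exists_square_infix_of_getD_eq 0 (by omega) hsync
  exact fun hsf => hsf u (by rintro rfl; simp at hu; omega) hsq

end

/-- If `v ∈ {0,1,2}*` is square-free then `f(v)` contains no forbidden
`(1,4)`-factor. -/
theorem fMorph_no_forbiddenFactor (v : List ℕ) (hv : ∀ c ∈ v, c ≤ 2)
    (hsf : SquareFree v) : ¬ ForbiddenFactor 1 4 (fMorph v) := by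
  intro hff
  obtain ⟨p, n, hn, hlen, hfirst, hlast, hmid⟩ := hff.exists_shift
  rw [length_fMorph] at hlen
  obtain rfl | ⟨h8, h11⟩ | h8 : n = 3 ∨ (n % 8 = 3 ∧ 11 ≤ n) ∨ n % 8 = 7 := by omega
  · exact fMorph_no_short_pattern hv (by omega)
      ⟨hfirst, hmid (p + 1) (by omega) (by omega), hlast⟩
  · exact fMorph_not_periodic_of_mod_eight_eq_four (lo := p + 1) (by omega) (by omega)
      fun q hq hq' => hmid q (by omega) (by omega)
  · have he : n + 1 = 8 * ((n + 1) / 8) := by omega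
    refine not_squareFree_of_fMorph_periodic hv (lo := p + 1) (e := (n + 1) / 8) (by omega)
      (by omega) (fun q hq hq' => ?_) hsf
    rw [← he]
    exact hmid q (by omega) (by omega)
end

section
/- Let ρ : {1,2}* → {1,2}* be the morphism with ρ(1) = 22 and ρ(2) = 21, and let W = ρ^∞(2) = 21222121… be its infinite fixed point starting with 2. Then W contains no forbidden (2,5)-factor; that is, for j ∈ {1,2}, W has no factor of the form x' α₁ ⋯ α_j x'' where each α_i is a single letter, α₁+⋯+α_j ≥ 2 as integers, |x'| = |x''| = n with n ≡ 5 − j (mod 5), and writing x' = x'₁⋯x'ₙ and x'' = x''₁⋯x''ₙ one has x'₁ ≥ x''₁, x'ₙ ≤ x''ₙ, and x'_i = x''_i for all i ∈ {2,…,n−1}. -/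
lemma getE (W : ℕ → ℕ) (N : ℕ) (l mid r : List ℕ)
    (h : l ++ (mid ++ r) = (List.range N).map W) (o : ℕ) (ho : o < mid.length) :
    mid.getD o 0 = W (l.length + o) := by
  have hlen : l.length + o < N := by
    have := congrArg List.length h
    simp [List.length_append] at this
    omega
  have h1 : mid.getD o 0 = mid[o] := List.getD_eq_getElem _ _ ho
  have hlt : l.length + o < (l ++ (mid ++ r)).length := by
    simp [List.length_append]; omega
  have h2 : (l ++ (mid ++ r))[l.length + o]'hlt = mid[o] := by
    rw [List.getElem_append_right (by omega)]
    rw [List.getElem_append_left (by omega)]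
    congr 1
    omega
  rw [h1, ← h2]
  have h3 : ((List.range N).map W)[l.length + o]'(by simpa using hlen) = W (l.length + o) := by
    simp
  rw [← h3]
  congr 1

/-- Let `W = ρ^∞(2)` be the infinite fixed point of `ρ` starting with `2`
(characterized by `W 0 = 2` and `ρ(W n) = W (2n) W (2n+1)` for all `n`).  Then `W` contains
no forbidden `(2,5)`-factor, i.e. no prefix of `W` does. -/
theorem rho_fixedPoint_no_forbiddenFactor (W : ℕ → ℕ) (hW0 : W 0 = 2)
    (hWfix : ∀ n, rhoLetter (W n) = [W (2 * n), W (2 * n + 1)]) :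
    ∀ N, ¬ ForbiddenFactor 2 5 ((List.range N).map W) := by
  -- basic structure facts about W
  have key : ∀ m, W (2*m) = 2 ∧ (W m = 1 → W (2*m+1) = 2) ∧ (W m ≠ 1 → W (2*m+1) = 1) := by
    intro m
    have h := hWfix m
    by_cases h1 : W m = 1 <;> simp [rhoLetter, h1] at h
    · exact ⟨h.1.symm, fun _ => h.2.symm, fun hc => absurd h1 hc⟩
    · exact ⟨h.1.symm, fun hc => absurd hc h1, fun _ => h.2.symm⟩
  have hE : ∀ m, m % 2 = 0 → W m = 2 := by
    intro m hm
    have h := (key (m/2)).1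
    rwa [show 2 * (m/2) = m by omega] at h
  have hmem : ∀ m, W m = 1 ∨ W m = 2 := by
    intro m
    rcases Nat.mod_two_eq_zero_or_one m with hm | hm
    · exact Or.inr (hE m hm)
    · have h := key (m/2)
      rw [show 2 * (m/2) + 1 = m by omega] at h
      by_cases h1 : W (m/2) = 1
      · exact Or.inr (h.2.1 h1)
      · exact Or.inl (h.2.2 h1)
  have h41 : ∀ m, m % 4 = 1 → W m = 1 := by
    intro m hm
    have h := key (m/2)
    rw [show 2 * (m/2) + 1 = m by omega] at h
    apply h.2.2
    have : W (m/2) = 2 := hE _ (by omega)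
    omega
  have h43 : ∀ m, m % 2 = 1 → W m = 2 → m % 4 = 3 := by
    intro m hm hW
    rcases (show m % 4 = 1 ∨ m % 4 = 3 by omega) with h | h
    · have := h41 m h; omega
    · exact h
  have hdesc : ∀ t s, W (2*t+1) = W (2*s+1) → W t = W s := by
    intro t s h
    have kt := key t; have ks := key s
    by_cases h1 : W t = 1 <;> by_cases h2 : W s = 1
    · rw [h1, h2]
    · exfalso; rw [kt.2.1 h1, ks.2.2 h2] at h; omega
    · exfalso; rw [kt.2.2 h1, ks.2.1 h2] at h; omega
    · rcases hmem t with ht | ht; · omega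
      rcases hmem s with hs | hs; · omega
      rw [ht, hs]
  have lemA : ∀ t d, d % 2 = 1 → W t = W (t+d) → W (t+2) = W (t+2+d) → False := by
    intro t d hd h1 h2
    rcases Nat.mod_two_eq_zero_or_one t with ht | ht
    · have w1 : W t = 2 := hE t ht
      have w2 : W (t+2) = 2 := hE _ (by omega)
      have m1 : (t+d) % 4 = 3 := h43 _ (by omega) (by rw [← h1]; exact w1)
      have m2 : (t+2+d) % 4 = 3 := h43 _ (by omega) (by rw [← h2]; exact w2)
      omega
    · have w1 : W (t+d) = 2 := hE _ (by omega)
      have w2 : W (t+2+d) = 2 := hE _ (by omega)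
      have m1 : t % 4 = 3 := h43 _ (by omega) (h1.trans w1)
      have m2 : (t+2) % 4 = 3 := h43 _ (by omega) (h2.trans w2)
      omega
  have lemC : ∀ a b t ℓ, b % 2 = 1 → 4 * 2^a ≤ ℓ →
      (∀ x, t ≤ x → x < t + ℓ → W x = W (x + 2^a * b)) → False := by
    intro a
    induction a with
    | zero =>
      intro b t ℓ hb hℓ h
      simp only [pow_zero, one_mul] at h hℓ
      exact lemA t b hb (h t le_rfl (by omega)) (h (t+2) (by omega) (by omega))
    | succ a ih =>
      intro b t ℓ hb hℓ h
      have hp : (2:ℕ)^(a+1) = 2^a * 2 := pow_succ 2 a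
      apply ih b (t/2) (4 * 2^a) hb le_rfl
      intro y hy1 hy2
      have hx := h (2*y+1) (by omega) (by omega)
      have hsh : 2*y+1 + 2^(a+1) * b = 2*(y + 2^a*b) + 1 := by rw [hp]; ring
      rw [hsh] at hx
      exact hdesc y (y + 2^a*b) hx
  -- main argument
  intro N hFF
  obtain ⟨x', α, x'', hinf, hα1, hα2, hαmem, hαsum, hlen, hmod, hineq1, hineq2, hmid⟩ := hFF
  obtain ⟨lft, rt, hsplit⟩ := hinf
  obtain ⟨n, hn⟩ : ∃ k, x'.length = k := ⟨_, rfl⟩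
  obtain ⟨j, hj⟩ : ∃ k, α.length = k := ⟨_, rfl⟩
  obtain ⟨p, hp⟩ : ∃ k, lft.length = k := ⟨_, rfl⟩
  rw [hn] at hlen hmod hmid hineq2
  rw [hj] at hα1 hα2 hmod
  -- letter extraction
  have hx' : ∀ i, i < n → x'.getD i 0 = W (p + i) := by
    intro i hi
    have h := getE W N lft x' (α ++ (x'' ++ rt)) (by
      rw [← hsplit]; simp [List.append_assoc]) i (by omega)
    rwa [hp] at h
  have hα : ∀ i, i < j → α.getD i 0 = W (p + n + i) := by
    intro i hi
    have h := getE W N (lft ++ x') α (x'' ++ rt) (by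
      rw [← hsplit]; simp [List.append_assoc]) i (by omega)
    rwa [List.length_append, hp, hn] at h
  have hx'' : ∀ i, i < n → x''.getD i 0 = W (p + n + j + i) := by
    intro i hi
    have h := getE W N (lft ++ x' ++ α) x'' rt (by
      rw [← hsplit]; simp [List.append_assoc]) i (by omega)
    rwa [List.length_append, List.length_append, hp, hn, hj] at h
  have hjc : j = 1 ∨ j = 2 := by omega
  have hn3 : 3 ≤ n := by rcases hjc with h | h <;> rw [h] at hmod <;> omega
  have hn5 : (n + j) % 5 = 0 := by rcases hjc with h | h <;> rw [h] at hmod ⊢ <;> omega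
  have habs : ∀ x, p + 1 ≤ x → x < p + n - 1 → W x = W (x + (n + j)) := by
    intro x hx1 hx2
    have hi := hmid (x - p) (by omega) (by omega)
    rw [hx' (x - p) (by omega), hx'' (x - p) (by omega)] at hi
    rw [show p + (x - p) = x by omega, show p + n + j + (x - p) = x + (n + j) by omega] at hi
    exact hi
  have hB1 : W (p + n + j) ≤ W p := by
    have h1 := hx' 0 (by omega)
    have h2 := hx'' 0 (by omega)
    rw [h1, h2] at hineq1
    simpa using hineq1
  have hB2 : W (p + (n - 1)) ≤ W (p + n + j + (n - 1)) := by
    rw [← hlen] at hineq2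
    rw [hx' (n-1) (by omega), hx'' (n-1) (by omega)] at hineq2
    exact hineq2
  have hα1w : j = 1 → W (p + n) = 2 := by
    intro hj1
    have h0 := hα 0 (by omega)
    have hs : α.getD 0 0 = α.sum := by
      rcases α with _ | ⟨c, t⟩
      · simp at hj; omega
      · rcases t with _ | ⟨c2, t2⟩
        · simp
        · simp at hj; omega
    rw [hs, Nat.add_zero] at h0
    rcases hmem (p + n) with h | h
    · omega
    · exact h
  -- decompose n + j = 2^a * b
  obtain ⟨a, b, hb2, hDeq⟩ := Nat.exists_eq_pow_mul_and_not_dvd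
    (show n + j ≠ 0 by omega) 2 (by norm_num)
  have hbodd : b % 2 = 1 := by omega
  have h5b : (5:ℕ) ∣ b := by
    have h5D : (5:ℕ) ∣ n + j := by omega
    rw [hDeq] at h5D
    have hcop : Nat.Coprime 5 (2^a) := Nat.Coprime.pow_right a (by norm_num)
    exact hcop.dvd_of_dvd_mul_left h5D
  have hb5 : 5 ≤ b := Nat.le_of_dvd (by omega) h5b
  by_cases hbig : 4 * 2^a ≤ n - 2
  · exact lemC a b (p+1) (n-2) hbodd hbig (fun x h1 h2 => by
      rw [← hDeq]; exact habs x h1 (by omega))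
  · -- small cases: a ≤ 1
    have hD5 : 5 * 2^a ≤ n + j := by
      rw [hDeq]
      calc 5 * 2^a = 2^a * 5 := by ring
        _ ≤ 2^a * b := Nat.mul_le_mul_left _ hb5
    have ha : a = 0 ∨ a = 1 := by
      by_contra hc
      push_neg at hc
      have h2a : 2 ≤ a := by omega
      have : (2:ℕ)^2 ≤ 2^a := Nat.pow_le_pow_right (by norm_num) h2a
      norm_num at this
      omega
    rcases ha with ha | ha
    · -- a = 0 : n + j = 5
      rw [ha] at hDeq hbig
      norm_num at hDeq hbig
      have hD : n + j = 5 := by omega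
      rcases hjc with hj1 | hj2
      · -- n = 4, j = 1
        have e1 : W (p+1) = W (p+6) := by
          have h := habs (p+1) (by omega) (by omega)
          rwa [show p+1+(n+j) = p+6 by omega] at h
        have e2 : W (p+2) = W (p+7) := by
          have h := habs (p+2) (by omega) (by omega)
          rwa [show p+2+(n+j) = p+7 by omega] at h
        have e4 : W (p+4) = 2 := by
          have h := hα1w hj1
          rwa [show p+n = p+4 by omega] at h
        rcases Nat.mod_two_eq_zero_or_one p with hpp | hpp
        · have w2 : W (p+2) = 2 := hE _ (by omega)
          have w7 : W (p+7) = 2 := by rw [← e2]; exact w2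
          have m7 : (p+7) % 4 = 3 := h43 _ (by omega) w7
          have w6 : W (p+6) = 2 := hE _ (by omega)
          have w1 : W (p+1) = 2 := by rw [e1]; exact w6
          have m1 : (p+1) % 4 = 3 := h43 _ (by omega) w1
          omega
        · have w1 : W (p+1) = 2 := hE _ (by omega)
          have w6 : W (p+6) = 2 := by rw [← e1]; exact w1
          have m6 : (p+6) % 4 = 3 := h43 _ (by omega) w6
          have m4 : (p+4) % 4 = 3 := h43 _ (by omega) e4
          omega
      · -- n = 3, j = 2
        have e1 : W (p+1) = W (p+6) := by
          have h := habs (p+1) (by omega) (by omega)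
          rwa [show p+1+(n+j) = p+6 by omega] at h
        have eB1 : W (p+5) ≤ W p := by
          have h := hB1
          rwa [show p+n+j = p+5 by omega] at h
        have eB2 : W (p+2) ≤ W (p+7) := by
          have h := hB2
          rwa [show p+(n-1) = p+2 by omega, show p+n+j+(n-1) = p+7 by omega] at h
        rcases Nat.mod_two_eq_zero_or_one p with hpp | hpp
        · have w6 : W (p+6) = 2 := hE _ (by omega)
          have w1 : W (p+1) = 2 := by rw [e1]; exact w6
          have m1 : (p+1) % 4 = 3 := h43 _ (by omega) w1
          have w2 : W (p+2) = 2 := hE _ (by omega)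
          have w7 : W (p+7) = 2 := by rcases hmem (p+7) with h | h; · omega
                                      · exact h
          have m7 : (p+7) % 4 = 3 := h43 _ (by omega) w7
          omega
        · have w1 : W (p+1) = 2 := hE _ (by omega)
          have w6 : W (p+6) = 2 := by rw [← e1]; exact w1
          have m6 : (p+6) % 4 = 3 := h43 _ (by omega) w6
          have w5 : W (p+5) = 2 := hE _ (by omega)
          have wp : W p = 2 := by rcases hmem p with h | h; · omega
                                  · exact h
          have mp : p % 4 = 3 := h43 _ (by omega) wp
          omega
    · -- a = 1 : n + j = 10
      rw [ha] at hDeq hbig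
      norm_num at hDeq hbig
      have hD : n + j = 10 := by omega
      have hn8 : 8 ≤ n := by omega
      rcases Nat.mod_two_eq_zero_or_one p with hpp | hpp
      · obtain ⟨u, hu⟩ : ∃ u, p = 2*u := ⟨p/2, by omega⟩
        have d1 : W (2*u+1) = W (2*(u+5)+1) := by
          rw [show 2*u+1 = p+1 by omega, show 2*(u+5)+1 = (p+1) + (n+j) by omega]
          exact habs (p+1) (by omega) (by omega)
        have d2 : W (2*(u+2)+1) = W (2*(u+7)+1) := by
          rw [show 2*(u+2)+1 = p+5 by omega, show 2*(u+7)+1 = (p+5) + (n+j) by omega]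
          exact habs (p+5) (by omega) (by omega)
        have g1 := hdesc u (u+5) d1
        have g2 := hdesc (u+2) (u+7) d2
        exact lemA u 5 (by omega) g1 (by rwa [show u+2+5 = u+7 by omega])
      · obtain ⟨u, hu⟩ : ∃ u, p = 2*u+1 := ⟨p/2, by omega⟩
        have d1 : W (2*(u+1)+1) = W (2*(u+6)+1) := by
          rw [show 2*(u+1)+1 = p+2 by omega, show 2*(u+6)+1 = (p+2) + (n+j) by omega]
          exact habs (p+2) (by omega) (by omega)
        have d2 : W (2*(u+3)+1) = W (2*(u+8)+1) := by
          rw [show 2*(u+3)+1 = p+6 by omega, show 2*(u+8)+1 = (p+6) + (n+j) by omega]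
          exact habs (p+6) (by omega) (by omega)
        have g1 := hdesc (u+1) (u+6) d1
        have g2 := hdesc (u+3) (u+8) d2
        exact lemA (u+1) 5 (by omega) (by rwa [show u+1+5 = u+6 by omega])
          (by rwa [show u+1+2 = u+3 by omega, show u+1+2+5 = u+8 by omega])
end

section
/- The formula with reversal φ₂ = x y₁ y₂ x · ȳ₁ · ȳ₂ is 5-avoidable; in fact, letting ρ : {1,2}* → {1,2}* be the morphism with ρ(1) = 22 and ρ(2) = 21 and W = ρ^∞(2) its infinite fixed point starting with 2, the 5-cyclic W-word C₅(W) is an infinite word over 5 letters all of whose finite prefixes avoid φ₂. -/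
/-!
Read `C₅(W)` as a function of the position: position `p` lies in block `blockIndex W p`, of
length `W (blockIndex W p) ∈ {1, 2}` and letter `a (blockIndex W p % 5)`. Consecutive distinct
letters are `a_i a_{i+1}`, so a factor whose reversal is also a factor is a power of one letter,
and in an occurrence of `X Y₁ Y₂ X` the gap `Y₁ Y₂` meets at most two blocks. A block boundary is a
change of letter, so the two occurrences of `X` see the same boundaries, shifted by `E` blocks with
`5 ∣ E`; the blocks inside `X` give `W c = W (c + E)` for at least `E - 4` consecutive `c`, and
the blocks at the ends of `X` give inequalities. Since `W (2y + 1)` determines `W y` and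
`W (2y) = 2`, no `3 · 2 ^ k` consecutive equalities `W x = W (x + 2 ^ k e)` with `e` odd exist,
which excludes `E ≥ 10`; for `E = 5` a parity argument excludes the remaining configurations.
-/

namespace PhiTwo

section RhoFixedPoint

variable {W : ℕ → ℕ} (hW : ∀ n, rhoLetter (W n) = [W (2 * n), W (2 * n + 1)])
include hW

theorem W_two_mul_and_W_two_mul_add_one (m : ℕ) :
    W (2 * m) = 2 ∧ W (2 * m + 1) = if W m = 1 then 2 else 1 := by
  have h := hW m
  unfold rhoLetter at h
  split_ifs at h ⊢ <;> simp only [List.cons.injEq, and_true] at h <;> omega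

theorem W_two_mul (m : ℕ) : W (2 * m) = 2 := (W_two_mul_and_W_two_mul_add_one hW m).1

theorem W_two_mul_add_one_eq_two_iff (m : ℕ) : W (2 * m + 1) = 2 ↔ W m = 1 := by
  rw [(W_two_mul_and_W_two_mul_add_one hW m).2]
  split_ifs <;> simp_all

theorem W_eq_one_or_two (n : ℕ) : W n = 1 ∨ W n = 2 := by
  obtain ⟨m, rfl | rfl⟩ := Nat.even_or_odd' n
  · exact .inr (W_two_mul hW m)
  · rw [(W_two_mul_and_W_two_mul_add_one hW m).2]
    split_ifs <;> simp

theorem W_pos (n : ℕ) : 0 < W n := by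
  rcases W_eq_one_or_two hW n with h | h <;> omega

theorem W_le_two (n : ℕ) : W n ≤ 2 := by
  rcases W_eq_one_or_two hW n with h | h <;> omega

theorem W_eq_of_W_two_mul_add_one_eq {m m' : ℕ} (h : W (2 * m + 1) = W (2 * m' + 1)) :
    W m = W m' := by
  have := W_two_mul_add_one_eq_two_iff hW m
  have := W_two_mul_add_one_eq_two_iff hW m'
  rcases W_eq_one_or_two hW m with h₁ | h₁ <;> rcases W_eq_one_or_two hW m' with h₂ | h₂ <;>
    rcases W_eq_one_or_two hW (2 * m + 1) with h₃ | h₃ <;> omega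

/-- For odd `x = 2m + 1` both `W m` and `W (m + 1)` would be `1`, but `11` is not a factor
of `W`. -/
theorem even_of_W_eq_two_of_W_add_two_eq_two {x : ℕ} (h₀ : W x = 2) (h₂ : W (x + 2) = 2) :
    Even x := by
  by_contra hx
  obtain ⟨m, rfl⟩ := Nat.not_even_iff_odd.mp hx
  have h₁ : W m = 1 := (W_two_mul_add_one_eq_two_iff hW m).mp h₀
  have h₃ : W (m + 1) = 1 := (W_two_mul_add_one_eq_two_iff hW (m + 1)).mp h₂
  obtain ⟨k, rfl | rfl⟩ := Nat.even_or_odd' m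
  · rw [W_two_mul hW] at h₁; omega
  · rw [show 2 * k + 1 + 1 = 2 * (k + 1) by ring, W_two_mul hW] at h₃; omega

theorem W_eq_two_of_W_eq_of_odd {x e : ℕ} (he : Odd e) (h : W x = W (x + e)) :
    W x = 2 ∧ W (x + e) = 2 := by
  obtain ⟨m, rfl | rfl⟩ := Nat.even_or_odd' x
  · rw [← h, W_two_mul hW]; simp
  · obtain ⟨c, rfl⟩ := he
    rw [h, show 2 * m + 1 + (2 * c + 1) = 2 * (m + c + 1) by ring, W_two_mul hW]; simp

theorem not_forall_W_eq_W_add_odd {s e : ℕ} (he : Odd e) :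
    ¬ ∀ i < 3, W (s + i) = W (s + i + e) := by
  intro h
  obtain ⟨h₀, h₀'⟩ := W_eq_two_of_W_eq_of_odd hW he (h 0 (by norm_num))
  obtain ⟨h₂, h₂'⟩ := W_eq_two_of_W_eq_of_odd hW he (h 2 (by norm_num))
  have hs := even_of_W_eq_two_of_W_add_two_eq_two hW h₀ h₂
  have hse := even_of_W_eq_two_of_W_add_two_eq_two hW (x := s + e) (by simpa using h₀')
    (by rwa [show s + e + 2 = s + 2 + e by ring])
  rw [Nat.even_add] at hse
  exact Nat.not_even_iff_odd.mpr he (hse.mp (by simpa using hs))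

theorem W_shift_of_W_shift_two_mul {s d n : ℕ}
    (h : ∀ i < 2 * n, W (s + i) = W (s + i + 2 * d)) :
    ∀ i < n, W (s / 2 + i) = W (s / 2 + i + d) := by
  intro i hi
  apply W_eq_of_W_two_mul_add_one_eq hW
  have := h (2 * (s / 2 + i) + 1 - s) (by omega)
  rwa [show s + (2 * (s / 2 + i) + 1 - s) = 2 * (s / 2 + i) + 1 by omega,
    show 2 * (s / 2 + i) + 1 + 2 * d = 2 * (s / 2 + i + d) + 1 by ring] at this

theorem not_forall_W_eq_W_add_two_pow_mul_odd (k : ℕ) {s e : ℕ} (he : Odd e) :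
    ¬ ∀ i < 3 * 2 ^ k, W (s + i) = W (s + i + 2 ^ k * e) := by
  induction k generalizing s with
  | zero => simpa using not_forall_W_eq_W_add_odd hW he
  | succ k ih =>
    intro h
    refine ih (W_shift_of_W_shift_two_mul hW (s := s) ?_)
    simpa [pow_succ, mul_assoc, mul_comm, mul_left_comm] using h

theorem not_forall_W_eq_W_add {s d : ℕ} (h5 : 5 ∣ d) (hd : 5 < d) :
    ¬ ∀ i < d - 4, W (s + i) = W (s + i + d) := by
  intro h
  obtain ⟨k, e, he, rfl⟩ := Nat.exists_eq_two_pow_mul_odd (n := d) (by omega)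
  have h5e : 5 ∣ e :=
    (Nat.Coprime.pow_right k (by norm_num : Nat.Coprime 5 2)).dvd_of_dvd_mul_left h5
  have hlen : 3 * 2 ^ k ≤ 2 ^ k * e - 4 := by
    obtain ⟨c, rfl⟩ := h5e
    obtain ⟨t, ht⟩ := he
    have hc : 2 ^ k * 5 ≤ 2 ^ k * (5 * c) := Nat.mul_le_mul_left _ (by omega)
    rcases Nat.eq_zero_or_pos k with rfl | hk
    · simp only [pow_zero, one_mul] at hd ⊢; omega
    · have : 2 ≤ 2 ^ k := by simpa using Nat.pow_le_pow_right two_pos hk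
      omega
  exact not_forall_W_eq_W_add_two_pow_mul_odd hW k he fun i hi => h i (by omega)

theorem not_W_eq_one_and_W_add_three_eq_one (m : ℕ) : ¬ (W m = 1 ∧ W (m + 3) = 1) := by
  rintro ⟨h₀, h₃⟩
  obtain ⟨k, rfl | rfl⟩ := Nat.even_or_odd' m
  · rw [W_two_mul hW] at h₀; omega
  · rw [show 2 * k + 1 + 3 = 2 * (k + 2) by ring, W_two_mul hW] at h₃; omega

theorem false_of_W_shift_five (t : ℕ) (h₁ : W (t + 1) = W (t + 6)) (h₅ : W (t + 5) ≤ W t)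
    (h₂ : W (t + 2) ≤ W (t + 7)) : False := by
  have hle := W_le_two hW
  obtain ⟨m, rfl | rfl⟩ := Nat.even_or_odd' t
  · refine not_W_eq_one_and_W_add_three_eq_one hW m ⟨?_, ?_⟩
    · rw [← W_two_mul_add_one_eq_two_iff hW, h₁, show 2 * m + 6 = 2 * (m + 3) by ring,
        W_two_mul hW]
    · rw [← W_two_mul_add_one_eq_two_iff hW, show 2 * (m + 3) + 1 = 2 * m + 7 by ring]
      rw [show 2 * m + 2 = 2 * (m + 1) by ring, W_two_mul hW] at h₂
      linarith [hle (2 * m + 7)]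
  · refine not_W_eq_one_and_W_add_three_eq_one hW m ⟨?_, ?_⟩
    · rw [← W_two_mul_add_one_eq_two_iff hW]
      rw [show 2 * m + 1 + 5 = 2 * (m + 3) by ring, W_two_mul hW] at h₅
      linarith [hle (2 * m + 1)]
    · rw [← W_two_mul_add_one_eq_two_iff hW, show 2 * (m + 3) + 1 = 2 * m + 1 + 6 by ring, ← h₁,
        show 2 * m + 1 + 1 = 2 * (m + 1) by ring, W_two_mul hW]

/-- The shadow in `W` of two occurrences of a factor `X` of `C₅(W)`: `X` meets the blocks
`s, …, b`, its second occurrence is shifted by `E` blocks, and the `s + E - 1 - b` blocks strictly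
between them, together with the parts of blocks `b` and `s + E` not covered by `X`, form the gap. -/
theorem false_of_W_shifted_factor {s b E : ℕ} (h5 : 5 ∣ E) (hE : 0 < E)
    (hper : ∀ c, s < c → c < b → W (c + E) = W c) (hgap : s + E ≤ b + 3)
    (hgap₂ : s + E = b + 3 → W (s + E) ≤ W s ∧ W b ≤ W (b + E))
    (hgap₁ : s + E = b + 2 → W (s + E) ≤ W s ∨ W b ≤ W (b + E)) : False := by
  obtain rfl | hE5 : E = 5 ∨ 5 < E := by omega
  · have hfalse := false_of_W_shift_five hW
    have hper' : ∀ i, 0 < i → s + i < b → W (s + i) = W (s + i + 5) := fun i hi hib =>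
      (hper (s + i) (by omega) hib).symm
    obtain hb | rfl | rfl : s + 4 ≤ b ∨ b = s + 3 ∨ b = s + 2 := by omega
    · exact hfalse (s + 1) (hper' 2 (by omega) (by omega))
        (by rw [hper' 1 (by omega) (by omega)]) (hper' 3 (by omega) (by omega)).le
    · rcases hgap₁ (by ring) with h | h
      · exact hfalse s (hper' 1 (by omega) (by omega)) h (hper' 2 (by omega) (by omega)).le
      · exact hfalse (s + 1) (hper' 2 (by omega) (by omega))
          (by rw [hper' 1 (by omega) (by omega)]) h
    · obtain ⟨h, h'⟩ := hgap₂ (by ring)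
      exact hfalse s (hper' 1 (by omega) (by omega)) h h'
  · refine not_forall_W_eq_W_add hW h5 hE5 (s := s + 1) fun i hi => ?_
    exact (hper (s + 1 + i) (by omega) (by omega)).symm

end RhoFixedPoint

section Blocks

variable (W : ℕ → ℕ)

def blockStart (b : ℕ) : ℕ := ∑ i ∈ Finset.range b, W i

def blockIndex (p : ℕ) : ℕ := Nat.findGreatest (fun b => blockStart W b ≤ p) p

variable {W}

theorem blockStart_succ (b : ℕ) : blockStart W (b + 1) = blockStart W b + W b :=
  Finset.sum_range_succ W b

variable (hpos : ∀ n, 0 < W n)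
include hpos

theorem blockStart_strictMono : StrictMono (blockStart W) :=
  strictMono_nat_of_lt_succ fun b => by
    rw [blockStart_succ]; exact Nat.lt_add_of_pos_right (hpos b)

theorem blockIndex_eq_iff {p b : ℕ} :
    blockIndex W p = b ↔ blockStart W b ≤ p ∧ p < blockStart W (b + 1) := by
  have hmono := blockStart_strictMono hpos
  have hspec : blockStart W (blockIndex W p) ≤ p :=
    Nat.findGreatest_spec (P := fun b => blockStart W b ≤ p) (Nat.zero_le p)
      (by simp [blockStart])
  have hlt : p < blockStart W (blockIndex W p + 1) := by
    by_cases h : blockIndex W p + 1 ≤ p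
    · exact not_le.mp (Nat.findGreatest_is_greatest (P := fun b => blockStart W b ≤ p)
        (Nat.lt_add_one _) h)
    · have : blockIndex W p + 1 ≤ blockStart W (blockIndex W p + 1) := hmono.id_le _
      omega
  constructor
  · rintro rfl; exact ⟨hspec, hlt⟩
  · rintro ⟨h₁, h₂⟩
    by_contra hne
    rcases Nat.lt_or_gt_of_ne hne with h | h
    · have := hmono.monotone (show blockIndex W p + 1 ≤ b by omega)
      omega
    · have := hmono.monotone (show b + 1 ≤ blockIndex W p by omega)
      omega

theorem blockStart_blockIndex_le (p : ℕ) : blockStart W (blockIndex W p) ≤ p :=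
  ((blockIndex_eq_iff hpos).mp rfl).1

theorem lt_blockStart_blockIndex_add_one (p : ℕ) : p < blockStart W (blockIndex W p + 1) :=
  ((blockIndex_eq_iff hpos).mp rfl).2

theorem blockIndex_blockStart (b : ℕ) : blockIndex W (blockStart W b) = b :=
  (blockIndex_eq_iff hpos).mpr ⟨le_rfl, blockStart_strictMono hpos (Nat.lt_add_one b)⟩

theorem blockIndex_mono : Monotone (blockIndex W) := by
  intro p q hpq
  by_contra! h
  have := (blockStart_strictMono hpos).monotone
    (show blockIndex W q + 1 ≤ blockIndex W p by omega)
  have := blockStart_blockIndex_le hpos p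
  have := lt_blockStart_blockIndex_add_one hpos q
  omega

theorem blockIndex_succ (p : ℕ) :
    blockIndex W (p + 1) = blockIndex W p ∨ blockIndex W (p + 1) = blockIndex W p + 1 := by
  have hmono := blockIndex_mono hpos (Nat.le_add_right p 1)
  by_contra! h
  have h₁ := (blockStart_strictMono hpos).monotone
    (show blockIndex W p + 1 + 1 ≤ blockIndex W (p + 1) by omega)
  have h₂ := blockStart_strictMono hpos (Nat.lt_add_one (blockIndex W p + 1))
  have h₃ := blockStart_blockIndex_le hpos (p + 1)
  have h₄ := lt_blockStart_blockIndex_add_one hpos p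
  omega

theorem sub_lt_of_blockIndex_eq {p q : ℕ} (h : blockIndex W p = blockIndex W q) (hpq : p ≤ q) :
    q - p < W (blockIndex W p) := by
  have h₁ := blockStart_blockIndex_le hpos p
  have h₂ := lt_blockStart_blockIndex_add_one hpos q
  rw [← h, blockStart_succ] at h₂
  omega

theorem blockStart_blockIndex_of_succ {y : ℕ}
    (h : blockIndex W (y + 1) = blockIndex W y + 1) :
    blockStart W (blockIndex W (y + 1)) = y + 1 := by
  have h₁ := blockStart_blockIndex_le hpos (y + 1)
  have h₂ := lt_blockStart_blockIndex_add_one hpos y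
  rw [h] at h₁ ⊢
  omega

section Aligned

variable {p q ℓ E : ℕ} (halign : ∀ r < ℓ, blockIndex W (q + r) = blockIndex W (p + r) + E)
include halign

/-- Block boundaries strictly inside the first occurrence are carried to the second one. -/
theorem blockStart_add_add_eq {c : ℕ} (hc₁ : blockIndex W p < c)
    (hc₂ : c ≤ blockIndex W (p + ℓ - 1)) : blockStart W (c + E) + p = blockStart W c + q := by
  have hmono := (blockStart_strictMono hpos).monotone
  have hp := lt_blockStart_blockIndex_add_one hpos p
  have hpc := hmono (show blockIndex W p + 1 ≤ c by omega)
  have hcℓ := (hmono hc₂).trans (blockStart_blockIndex_le hpos (p + ℓ - 1))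
  have hprev := blockStart_strictMono hpos (show c - 1 < c by omega)
  have hc : blockIndex W (p + (blockStart W c - p)) = c := by
    rw [show p + (blockStart W c - p) = blockStart W c by omega, blockIndex_blockStart hpos]
  have hc' : blockIndex W (p + (blockStart W c - p - 1)) = c - 1 := by
    rw [blockIndex_eq_iff hpos, show c - 1 + 1 = c by omega]
    omega
  have h₁ := blockStart_blockIndex_le hpos (q + (blockStart W c - p))
  have h₂ := lt_blockStart_blockIndex_add_one hpos (q + (blockStart W c - p - 1))
  rw [halign _ (by omega), hc] at h₁
  rw [halign _ (by omega), hc', show c - 1 + E + 1 = c + E by omega] at h₂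
  omega

theorem W_add_eq_of_aligned {c : ℕ} (hc₁ : blockIndex W p < c)
    (hc₂ : c < blockIndex W (p + ℓ - 1)) : W (c + E) = W c := by
  have h₁ := blockStart_add_add_eq hpos halign hc₁ hc₂.le
  have h₂ := blockStart_add_add_eq hpos halign (c := c + 1) (by omega) hc₂
  rw [show c + 1 + E = c + E + 1 by ring, blockStart_succ, blockStart_succ] at h₂
  omega

theorem W_add_le_of_blockStart_eq (hsb : blockIndex W p < blockIndex W (p + ℓ - 1))
    (hq : blockStart W (blockIndex W p + E) = q) :
    W (blockIndex W p + E) ≤ W (blockIndex W p) := by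
  have h := blockStart_add_add_eq hpos halign (c := blockIndex W p + 1) (by omega) (by omega)
  have hp := blockStart_blockIndex_le hpos p
  rw [show blockIndex W p + 1 + E = blockIndex W p + E + 1 by ring, blockStart_succ,
    blockStart_succ, hq] at h
  omega

theorem W_le_W_add_of_blockStart_eq (hℓ : 0 < ℓ)
    (hsb : blockIndex W p < blockIndex W (p + ℓ - 1))
    (hend : blockStart W (blockIndex W (p + ℓ - 1) + 1) = p + ℓ) :
    W (blockIndex W (p + ℓ - 1)) ≤ W (blockIndex W (p + ℓ - 1) + E) := by
  have h := blockStart_add_add_eq hpos halign (c := blockIndex W (p + ℓ - 1)) hsb le_rfl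
  have hlast := lt_blockStart_blockIndex_add_one hpos (q + (ℓ - 1))
  rw [halign _ (by omega), show p + (ℓ - 1) = p + ℓ - 1 by omega, blockStart_succ] at hlast
  rw [blockStart_succ] at hend
  omega

end Aligned

end Blocks

section CyclicLetter

variable {A : Type*} (m : ℕ) (a : ℕ → A) (W : ℕ → ℕ)

/-- `C_m(W)` read as a function of the position. -/
def cyclicLetter (p : ℕ) : A := a (blockIndex W p % m)

theorem cyclicWordFrom_append_singleton (x : ℕ) (xs : List ℕ) (i : ℕ) :
    cyclicWordFrom m a i (xs ++ [x]) =
      cyclicWordFrom m a i xs ++ List.replicate x (a ((i + xs.length) % m)) := by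
  induction xs generalizing i with
  | nil => simp [cyclicWordFrom]
  | cons y ys ih =>
    simp only [List.cons_append, cyclicWordFrom, ih, List.append_assoc, List.length_cons]
    rw [show i + 1 + ys.length = i + (ys.length + 1) by ring]

variable {W}

theorem cyclicWord_map_range (hpos : ∀ n, 0 < W n) (N : ℕ) :
    cyclicWord m a ((List.range N).map W) =
      (List.range (blockStart W N)).map (cyclicLetter m a W) := by
  induction N with
  | zero => simp [cyclicWord, cyclicWordFrom, blockStart]
  | succ N ih =>
    rw [cyclicWord, List.range_succ, List.map_append, List.map_singleton,
      cyclicWordFrom_append_singleton, ← cyclicWord, ih, blockStart_succ, List.range_add,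
      List.map_append, List.map_map]
    congr 1
    refine (List.eq_replicate_iff.mpr ⟨by simp, ?_⟩).symm
    simp only [List.mem_map, List.mem_range, Function.comp_apply]
    rintro _ ⟨i, hi, rfl⟩
    have hN : blockIndex W (blockStart W N + i) = N :=
      (blockIndex_eq_iff hpos).mpr ⟨by omega, by rw [blockStart_succ]; omega⟩
    simp [cyclicLetter, hN]

variable {m a}

theorem le_of_add_mod_eq_mod {x k m : ℕ} (hk : 0 < k) (h : (x + k) % m = x % m) : m ≤ k := by
  have := Nat.sub_mod_eq_zero_of_mod_eq h
  rw [Nat.add_sub_cancel_left] at this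
  exact Nat.le_of_dvd hk (Nat.dvd_of_mod_eq_zero this)

theorem mod_eq_of_cyclicLetter_eq (hm : 0 < m) (ha : Set.InjOn a (Set.Iio m)) {p q : ℕ}
    (h : cyclicLetter m a W p = cyclicLetter m a W q) :
    blockIndex W p % m = blockIndex W q % m :=
  ha (Nat.mod_lt _ hm) (Nat.mod_lt _ hm) h

theorem cyclicLetter_succ_eq_iff (hpos : ∀ n, 0 < W n) (hm : 2 ≤ m)
    (ha : Set.InjOn a (Set.Iio m)) (p : ℕ) : cyclicLetter m a W (p + 1) = cyclicLetter m a W p ↔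
      blockIndex W (p + 1) = blockIndex W p := by
  refine ⟨fun h => ?_, fun h => by rw [cyclicLetter, h, cyclicLetter]⟩
  have := mod_eq_of_cyclicLetter_eq (by omega) ha h
  refine (blockIndex_succ hpos p).resolve_right fun h' => ?_
  rw [h'] at this
  have := le_of_add_mod_eq_mod one_pos this
  omega

section
variable (hpos : ∀ n, 0 < W n) (ha : Set.InjOn a (Set.Iio m))
include hpos ha

theorem blockIndex_add_eq_of_cyclicLetter_eq (hm : 2 ≤ m) {p q ℓ : ℕ} (hpq : p ≤ q)
    (h : ∀ r < ℓ, cyclicLetter m a W (p + r) = cyclicLetter m a W (q + r)) :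
    ∀ r < ℓ,
      blockIndex W (q + r) = blockIndex W (p + r) + (blockIndex W q - blockIndex W p) := by
  intro r
  induction r with
  | zero =>
    have := blockIndex_mono hpos hpq
    simp only [add_zero]
    omega
  | succ r ih =>
    intro hr
    have e₀ := h r (by omega)
    have e₁ := h (r + 1) (by omega)
    rw [← add_assoc, ← add_assoc] at e₁
    have hstep : blockIndex W (p + r + 1) = blockIndex W (p + r) ↔
        blockIndex W (q + r + 1) = blockIndex W (q + r) := by
      rw [← cyclicLetter_succ_eq_iff hpos hm ha, ← cyclicLetter_succ_eq_iff hpos hm ha, e₀, e₁]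
    have := ih (by omega)
    rw [← add_assoc, ← add_assoc]
    rcases blockIndex_succ hpos (p + r) with hp | hp <;>
      rcases blockIndex_succ hpos (q + r) with hq | hq <;> omega

theorem blockIndex_add_eq_of_cyclicLetter_add_eq (hm : 2 ≤ m) {o n : ℕ}
    (h : ∀ r, r + 1 < n → cyclicLetter m a W (o + r + 1) = cyclicLetter m a W (o + r)) :
    ∀ r < n, blockIndex W (o + r) = blockIndex W o := by
  intro r
  induction r with
  | zero => simp
  | succ r ih =>
    intro hr
    rw [← add_assoc, ← ih (by omega)]
    exact (cyclicLetter_succ_eq_iff hpos hm ha (o + r)).mp (h r hr)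

/-- In `C_m(W)` the letter after `a_i` is `a_i` or `a_{i+1}`, so for `m ≥ 3` a change of letter
can never be read backwards. -/
theorem cyclicLetter_succ_ne_of_swap (hm : 3 ≤ m) {x y : ℕ}
    (hy : cyclicLetter m a W (y + 1) ≠ cyclicLetter m a W y)
    (hx : cyclicLetter m a W x = cyclicLetter m a W (y + 1)) :
    cyclicLetter m a W (x + 1) ≠ cyclicLetter m a W y := by
  intro hx'
  have hby : blockIndex W (y + 1) = blockIndex W y + 1 :=
    (blockIndex_succ hpos y).resolve_left
      fun h => hy ((cyclicLetter_succ_eq_iff hpos (by omega) ha y).mpr h)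
  have h₁ : blockIndex W x ≡ blockIndex W y + 1 [MOD m] := by
    rw [← hby]; exact mod_eq_of_cyclicLetter_eq (by omega) ha hx
  have h₂ : blockIndex W (x + 1) ≡ blockIndex W y [MOD m] :=
    mod_eq_of_cyclicLetter_eq (by omega) ha hx'
  rcases blockIndex_succ hpos x with hbx | hbx <;> rw [hbx] at h₂
  · have := le_of_add_mod_eq_mod one_pos (h₁.symm.trans h₂)
    omega
  · have := le_of_add_mod_eq_mod two_pos ((h₁.symm.add_right 1).trans h₂)
    omega

end

end CyclicLetter

section Occurrences

variable {A : Type*}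

def OccursAt (f : ℕ → A) (u : List A) (o : ℕ) : Prop :=
  ∀ i (hi : i < u.length), u[i] = f (o + i)

variable {f : ℕ → A} {u v : List A} {o : ℕ}

theorem occursAt_append :
    OccursAt f (u ++ v) o ↔ OccursAt f u o ∧ OccursAt f v (o + u.length) := by
  refine ⟨fun h => ⟨fun i hi => ?_, fun i hi => ?_⟩, fun ⟨hu, hv⟩ i hi => ?_⟩
  · rw [← h i (by rw [List.length_append]; omega), List.getElem_append_left hi]
  · rw [add_assoc, ← h (u.length + i) (by rw [List.length_append]; omega),
      List.getElem_append_right (by omega)]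
    simp only [Nat.add_sub_cancel_left]
  · rcases Nat.lt_or_ge i u.length with hiu | hiu
    · rw [List.getElem_append_left hiu, hu i hiu]
    · rw [List.length_append] at hi
      rw [List.getElem_append_right hiu, hv _ (by omega)]
      congr 1; omega

theorem exists_occursAt_of_infix {n : ℕ} (h : u <:+: (List.range n).map f) :
    ∃ o, OccursAt f u o := by
  obtain ⟨s, t, hst⟩ := h
  refine ⟨s.length, fun i hi => ?_⟩
  have hlen : s.length + i < ((List.range n).map f).length := by
    rw [← hst, List.length_append, List.length_append]; omega
  have := List.getElem_of_eq hst.symm hlen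
  simpa [List.getElem_append_left, List.getElem_append_right, hi] using this.symm

end Occurrences

section Avoidance

variable {A : Type*} {m : ℕ} {a : ℕ → A} {W : ℕ → ℕ}

theorem OccursAt.cyclicLetter_add_eq_of_reverse (hpos : ∀ n, 0 < W n)
    (ha : Set.InjOn a (Set.Iio m)) (hm : 3 ≤ m) {u : List A} {o o' : ℕ}
    (hu : OccursAt (cyclicLetter m a W) u o) (hr : OccursAt (cyclicLetter m a W) u.reverse o') :
    ∀ r, r + 1 < u.length → cyclicLetter m a W (o + r + 1) = cyclicLetter m a W (o + r) := by
  intro r hr'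
  by_contra hne
  have hlen : u.reverse.length = u.length := List.length_reverse
  have h₁ := hr (u.length - 2 - r) (by omega)
  have h₂ := hr (u.length - 2 - r + 1) (by omega)
  rw [List.getElem_reverse, hu _ (by omega),
    show u.length - 1 - (u.length - 2 - r) = r + 1 by omega, ← add_assoc] at h₁
  rw [List.getElem_reverse, hu _ (by omega),
    show u.length - 1 - (u.length - 2 - r + 1) = r by omega] at h₂
  exact cyclicLetter_succ_ne_of_swap hpos ha hm hne h₁.symm h₂.symm

variable (hW : ∀ n, rhoLetter (W n) = [W (2 * n), W (2 * n + 1)]) (ha : Set.InjOn a (Set.Iio 5))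
include hW ha

/-- `q` is the last position of the gap between the two occurrences of `X`. -/
theorem false_of_cyclicLetter_return {p ℓ q : ℕ} (hℓ : 0 < ℓ) (hq : p + ℓ + 2 ≤ q + 1)
    (hgap : blockIndex W q ≤ blockIndex W (p + ℓ) + 1)
    (hX : ∀ r < ℓ, cyclicLetter 5 a W (p + r) = cyclicLetter 5 a W (q + 1 + r)) : False := by
  have hpos := W_pos hW
  have halign := blockIndex_add_eq_of_cyclicLetter_eq hpos ha (by norm_num) (by omega) hX
  set s := blockIndex W p
  set b := blockIndex W (p + ℓ - 1)
  set E := blockIndex W (q + 1) - s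
  have hsq : s ≤ blockIndex W (q + 1) := blockIndex_mono hpos (by omega)
  have hE5 : 5 ∣ E := by
    have := mod_eq_of_cyclicLetter_eq (by norm_num) ha (by simpa using hX 0 hℓ)
    exact (Nat.modEq_iff_dvd' hsq).mp this
  have hE : 0 < E := by
    by_contra h
    have : q + 1 - p < W s :=
      sub_lt_of_blockIndex_eq hpos (show s = blockIndex W (q + 1) by omega) (by omega)
    have := W_le_two hW s
    omega
  have hq₁ := blockIndex_succ hpos q
  have hb₁ := blockIndex_succ hpos (p + ℓ - 1)
  rw [show p + ℓ - 1 + 1 = p + ℓ by omega] at hb₁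
  have hsb : s < b := by omega
  have head (h : blockIndex W (q + 1) = blockIndex W q + 1) : W (s + E) ≤ W s :=
    W_add_le_of_blockStart_eq hpos halign hsb
      (by rw [show s + E = blockIndex W (q + 1) by omega]
          exact blockStart_blockIndex_of_succ hpos h)
  have tail (h : blockIndex W (p + ℓ) = b + 1) : W b ≤ W (b + E) := by
    refine W_le_W_add_of_blockStart_eq hpos halign hℓ hsb ?_
    have := blockStart_blockIndex_of_succ hpos (y := p + ℓ - 1)
    rw [show p + ℓ - 1 + 1 = p + ℓ by omega, h] at this
    exact this rfl
  refine false_of_W_shifted_factor hW hE5 hE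
    (fun c hc₁ hc₂ => W_add_eq_of_aligned hpos halign hc₁ hc₂) (by omega)
    (fun h => ⟨head (by omega), tail (by omega)⟩) (fun h => ?_)
  rcases hq₁ with hq₁ | hq₁
  · exact .inr (tail (by omega))
  · exact .inl (head hq₁)

theorem avoids_cyclicWord_map_range (N : ℕ) :
    Avoids 2 (cyclicWord 5 a ((List.range N).map W)) := by
  have hpos := W_pos hW
  rw [cyclicWord_map_range 5 a hpos]
  rintro ⟨X, Ys, hlen, hX, hYs, hocc, hrev⟩
  obtain ⟨Y₁, Y₂, rfl⟩ := List.length_eq_two.mp hlen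
  obtain ⟨p, hp⟩ := exists_occursAt_of_infix hocc
  simp only [List.flatten_cons, List.flatten_nil, List.append_nil, occursAt_append,
    List.length_append] at hp
  obtain ⟨⟨hX₁, hY₁, hY₂⟩, hX₂⟩ := hp
  have hconst {Y : List A} {o : ℕ} (hY : Y ∈ [Y₁, Y₂])
      (hocc : OccursAt (cyclicLetter 5 a W) Y o) :
      ∀ r < Y.length, blockIndex W (o + r) = blockIndex W o :=
    have ⟨o', hr⟩ := exists_occursAt_of_infix (hrev Y hY)
    blockIndex_add_eq_of_cyclicLetter_add_eq hpos ha (by norm_num)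
      (hocc.cyclicLetter_add_eq_of_reverse hpos ha (by norm_num) hr)
  have hℓ : 0 < X.length := List.length_pos_iff.mpr hX
  have hm₁ : 0 < Y₁.length := List.length_pos_iff.mpr (hYs Y₁ (by simp))
  have hm₂ : 0 < Y₂.length := List.length_pos_iff.mpr (hYs Y₂ (by simp))
  have h₁ := hconst (by simp) hY₁ (Y₁.length - 1) (by omega)
  have h₂ := hconst (by simp) hY₂ (Y₂.length - 1) (by omega)
  have hstep := blockIndex_succ hpos (p + X.length + (Y₁.length - 1))
  rw [show p + X.length + (Y₁.length - 1) + 1 = p + X.length + Y₁.length by omega] at hstep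
  refine false_of_cyclicLetter_return hW ha (p := p) (ℓ := X.length)
    (q := p + X.length + Y₁.length + (Y₂.length - 1)) hℓ (by omega) (by omega) fun r hr => ?_
  rw [← hX₁ r hr, hX₂ r hr]
  congr 1
  omega

end Avoidance

end PhiTwo

theorem phi_two_five_avoidable_general {A : Type*} (a : ℕ → A) (ha : Set.InjOn a (Set.Iio 5))
    (W : ℕ → ℕ)
    (hWfix : ∀ n, rhoLetter (W n) = [W (2 * n), W (2 * n + 1)]) :
    {w : List (Fin 5) | Avoids 2 w}.Infinite ∧
    ∀ N, Avoids 2 (cyclicWord 5 a ((List.range N).map W)) := by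
  have hpos := PhiTwo.W_pos hWfix
  have hfin : Set.InjOn (Fin.ofNat 5) (Set.Iio 5) := by
    intro x hx y hy h
    have := congrArg Fin.val h
    simp only [Fin.val_ofNat] at this
    rwa [Nat.mod_eq_of_lt hx, Nat.mod_eq_of_lt hy] at this
  refine ⟨Set.infinite_of_injective_forall_mem (fun N M h => ?_)
    (PhiTwo.avoids_cyclicWord_map_range hWfix hfin), PhiTwo.avoids_cyclicWord_map_range hWfix ha⟩
  have := congrArg List.length h
  simp only [PhiTwo.cyclicWord_map_range 5 _ hpos, List.length_map, List.length_range] at this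
  exact (PhiTwo.blockStart_strictMono hpos).injective this

/-- `φ₂` is 5-avoidable; in fact, for `W = ρ^∞(2)` the 5-cyclic `W`-word
`C₅(W)` (on distinct letters `a 0, …, a 4`) has all of its finite prefixes avoiding `φ₂`
(equivalently, the 5-cyclic word of every finite prefix of `W` avoids `φ₂`). -/
theorem phi_two_five_avoidable {A : Type*} (a : ℕ → A) (ha : Set.InjOn a (Set.Iio 5))
    (W : ℕ → ℕ) (hW0 : W 0 = 2)
    (hWfix : ∀ n, rhoLetter (W n) = [W (2 * n), W (2 * n + 1)]) :
    {w : List (Fin 5) | Avoids 2 w}.Infinite ∧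
    ∀ N, Avoids 2 (cyclicWord 5 a ((List.range N).map W)) :=
  phi_two_five_avoidable_general a ha W hWfix
end

section
/- Let ρ : {1,2}* → {1,2}* be the morphism with ρ(1) = 22 and ρ(2) = 21, let k ≥ 2, and let u be any word over {1,2,3} obtained from the prefix ρ^k(2) of ρ^∞(2) by replacing some (possibly zero) occurrences of the letter 2 by the letter 3. Then the 5-cyclic u-word C₅(u) avoids the formula with reversal φ₂. -/
def Vfp (n : ℕ) : ℕ :=
  if n % 2 = 0 then 2 else if Vfp (n / 2) = 2 then 1 else 2
decreasing_by omega

lemma Vfp_even (m : ℕ) : Vfp (2 * m) = 2 := by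
  rw [Vfp]; simp [Nat.mul_mod_right]

lemma Vfp_odd (m : ℕ) : Vfp (2 * m + 1) = if Vfp m = 2 then 1 else 2 := by
  have h1 : (2 * m + 1) % 2 = 1 := by omega
  have h2 : (2 * m + 1) / 2 = m := by omega
  rw [Vfp, h1, h2]; simp

lemma Vfp_mem (n : ℕ) : Vfp n = 1 ∨ Vfp n = 2 := by
  rw [Vfp]; split
  · right; rfl
  · split <;> simp

lemma Vfp_one_odd {n : ℕ} (h : Vfp n = 1) : n % 2 = 1 := by
  by_contra hc
  have h2 : n % 2 = 0 := by omega
  rw [Vfp] at h; simp [h2] at h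

lemma Vfp_odd_two_iff (m : ℕ) : Vfp (2 * m + 1) = 2 ↔ Vfp m = 1 := by
  rw [Vfp_odd]
  rcases Vfp_mem m with h | h <;> simp [h]

lemma Vfp_odd_one_iff (m : ℕ) : Vfp (2 * m + 1) = 1 ↔ Vfp m = 2 := by
  rw [Vfp_odd]
  rcases Vfp_mem m with h | h <;> simp [h]

lemma Vfp_even' {n : ℕ} (h : n % 2 = 0) : Vfp n = 2 := by rw [Vfp]; simp [h]

lemma Vfp_no11 {n : ℕ} (h1 : Vfp n = 1) (h2 : Vfp (n + 1) = 1) : False := by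
  have := Vfp_one_odd h1
  have := Vfp_one_odd h2
  omega

lemma Vfp_no4twos {x : ℕ} (h0 : Vfp x = 2) (h1 : Vfp (x+1) = 2) (h2 : Vfp (x+2) = 2)
    (h3 : Vfp (x+3) = 2) : False := by
  rcases Nat.even_or_odd x with ⟨m, hm⟩ | ⟨m, hm⟩
  · -- x = 2m : odd positions x+1 = 2m+1, x+3 = 2(m+1)+1
    have e1 : x + 1 = 2*m + 1 := by omega
    have e3 : x + 3 = 2*(m+1) + 1 := by omega
    rw [e1, Vfp_odd_two_iff] at h1
    rw [e3, Vfp_odd_two_iff] at h3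
    exact Vfp_no11 h1 h3
  · have e0 : x = 2*m + 1 := by omega
    have e2 : x + 2 = 2*(m+1) + 1 := by omega
    rw [e0, Vfp_odd_two_iff] at h0
    rw [e2, Vfp_odd_two_iff] at h2
    exact Vfp_no11 h0 h2

lemma Vfp_eq_two_left {j j' : ℕ} (h : Vfp j = Vfp j') (hp : (j + j') % 2 = 1) :
    Vfp j = 2 := by
  rcases Nat.mod_two_eq_zero_or_one j with hj | hj
  · exact Vfp_even' hj
  · have hj' : j' % 2 = 0 := by omega
    rw [h]; exact Vfp_even' hj'

lemma masterM : ∀ a, 1 ≤ a → ∀ x,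
    Vfp (x + 5*a) ≤ Vfp x →
    (∀ j, x < j → j < x + 5*a - 3 → Vfp j = Vfp (j + 5*a)) →
    Vfp (x + 5*a - 3) ≤ Vfp (x + 5*a - 3 + 5*a) → False := by
  intro a
  induction a using Nat.strong_induction_on with
  | _ a ih =>
    intro ha x h1 h2 h3
    rcases Nat.even_or_odd a with ⟨a', ha'⟩ | hodd
    · -- a = 2a' even
      have ha1 : 1 ≤ a' := by omega
      have key : ∀ m, (x+1)/2 ≤ m → m ≤ (x+1)/2 + 5*a' - 3 → Vfp m = Vfp (m + 5*a') := by
        intro m hm1 hm2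
        have hj := h2 (2*m+1) (by omega) (by omega)
        have e : 2*m+1 + 5*a = 2*(m + 5*a') + 1 := by omega
        rw [e] at hj
        rcases Vfp_mem m with h | h
        · have t1 : Vfp (2*m+1) = 2 := (Vfp_odd_two_iff m).2 h
          have t2 : Vfp (m+5*a') = 1 := (Vfp_odd_two_iff _).1 (hj ▸ t1)
          rw [h, t2]
        · have t1 : Vfp (2*m+1) = 1 := (Vfp_odd_one_iff m).2 h
          have t2 : Vfp (m+5*a') = 2 := (Vfp_odd_one_iff _).1 (hj ▸ t1)
          rw [h, t2]
      exact ih a' (by omega) ha1 ((x+1)/2)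
        (le_of_eq (key _ le_rfl (by omega)).symm)
        (fun j hj1 hj2 => key j (by omega) (by omega))
        (le_of_eq (key ((x+1)/2 + 5*a' - 3) (by omega) (by omega)))
    · obtain ⟨t, ht⟩ := hodd
      rcases eq_or_lt_of_le ha with h1a | h3a
      · -- a = 1
        have ha1 : a = 1 := h1a.symm
        subst ha1
        have hj := h2 (x+1) (by omega) (by omega)
        have e6 : x + 1 + 5*1 = x + 6 := by omega
        rw [e6] at hj
        have h3' : Vfp (x + 2) ≤ Vfp (x + 7) := by
          have e1 : x + 5*1 - 3 = x + 2 := by omega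
          have e2 : x + 5*1 - 3 + 5*1 = x + 7 := by omega
          rw [e2, e1] at h3; exact h3
        rcases Nat.mod_two_eq_zero_or_one x with hx | hx
        · -- x even, x = 2m
          obtain ⟨m, hm⟩ : ∃ m, x = 2*m := ⟨x/2, by omega⟩
          have t6 : Vfp (x+6) = 2 := Vfp_even' (by omega)
          have t1 : Vfp m = 1 := by
            have : Vfp (2*m+1) = 2 := by rw [show 2*m+1 = x+1 by omega, hj, t6]
            exact (Vfp_odd_two_iff m).1 this
          have t2 : Vfp (x+2) = 2 := Vfp_even' (by omega)
          have t7 : Vfp (x+7) = 2 := by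
            rcases Vfp_mem (x+7) with h | h
            · omega
            · exact h
          have t3 : Vfp (m+3) = 1 := by
            have e : x + 7 = 2*(m+3)+1 := by omega
            rw [e] at t7
            exact (Vfp_odd_two_iff _).1 t7
          have := Vfp_one_odd t1
          have := Vfp_one_odd t3
          omega
        · -- x odd, x = 2m+1
          obtain ⟨m, hm⟩ : ∃ m, x = 2*m+1 := ⟨x/2, by omega⟩
          have t1 : Vfp (x+1) = 2 := Vfp_even' (by omega)
          have t6 : Vfp (x+6) = 2 := by rw [← hj]; exact t1
          have t3 : Vfp (m+3) = 1 := by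
            have e : x + 6 = 2*(m+3)+1 := by omega
            rw [e] at t6
            exact (Vfp_odd_two_iff _).1 t6
          have t5 : Vfp (x+5*1) = 2 := Vfp_even' (by omega)
          have tx : Vfp x = 2 := by
            rcases Vfp_mem x with h | h
            · omega
            · exact h
          have t0 : Vfp m = 1 := by
            rw [hm] at tx
            exact (Vfp_odd_two_iff _).1 tx
          have := Vfp_one_odd t0
          have := Vfp_one_odd t3
          omega
      · -- a odd, a ≥ 3
        have key : ∀ j, x < j → j < x + 5*a - 3 → Vfp j = 2 := by
          intro j hj1 hj2
          exact Vfp_eq_two_left (h2 j hj1 hj2) (by omega)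
        exact Vfp_no4twos (key (x+1) (by omega) (by omega)) (key (x+2) (by omega) (by omega))
          (key (x+3) (by omega) (by omega)) (key (x+4) (by omega) (by omega))


lemma rhoLetter_V (i : ℕ) : rhoLetter (Vfp i) = [Vfp (2*i), Vfp (2*i+1)] := by
  rw [Vfp_even, Vfp_odd, rhoLetter]
  rcases Vfp_mem i with h | h <;> simp [h]

lemma flatMap_range_two (m : ℕ) :
    (List.range m).flatMap (fun i => [Vfp (2*i), Vfp (2*i+1)]) = (List.range (2*m)).map Vfp := by
  induction m with
  | zero => simp
  | succ n ihn =>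
      rw [List.range_succ, List.flatMap_append, ihn, show 2*(n+1) = (2*n+1)+1 by omega,
        List.range_succ, List.range_succ]
      simp

lemma rho_iter (k : ℕ) : rhoWord^[k] [2] = (List.range (2^k)).map Vfp := by
  induction k with
  | zero =>
      have h0 : Vfp 0 = 2 := Vfp_even 0
      simp only [Function.iterate_zero, id_eq, pow_zero]
      show [2] = List.map Vfp (List.range (0+1))
      rw [List.range_succ]
      simp [h0]
  | succ n ihn =>
      rw [Function.iterate_succ_apply', ihn, rhoWord, List.flatMap_map]
      have e : (fun i => rhoLetter (Vfp i)) = fun i => [Vfp (2*i), Vfp (2*i+1)] := by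
        funext i; exact rhoLetter_V i
      rw [e, flatMap_range_two, show 2^(n+1) = 2*2^n by ring]


def sig (u : List ℕ) (b : ℕ) : ℕ := (u.take b).sum

def Pb : List ℕ → ℕ → ℕ
  | [], _ => 0
  | c :: t, n => if n < c then 0 else Pb t (n - c) + 1

@[simp] lemma sig_zero (u : List ℕ) : sig u 0 = 0 := rfl
@[simp] lemma sig_nil (b : ℕ) : sig [] b = 0 := by simp [sig]
@[simp] lemma sig_cons (c : ℕ) (t : List ℕ) (b : ℕ) : sig (c::t) (b+1) = c + sig t b := by
  simp [sig]

lemma sig_succ : ∀ (u : List ℕ) (b : ℕ), b < u.length →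
    sig u (b+1) = sig u b + u.getD b 0
  | [], b, h => by simp at h
  | c :: t, 0, _ => by simp [sig]
  | c :: t, b+1, h => by
      rw [sig_cons, sig_cons, sig_succ t b (by simpa using h)]
      simp [Nat.add_assoc]

lemma sig_mono (u : List ℕ) : Monotone (sig u) := by
  intro b b' h
  unfold sig
  exact List.Sublist.sum_le_sum ((List.take_isPrefix_take.mpr (Or.inl h)).sublist)
    (by intro x _; omega)

lemma length_cwf {A : Type*} (m : ℕ) (a : ℕ → A) : ∀ (i : ℕ) (u : List ℕ),
    (cyclicWordFrom m a i u).length = u.sum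
  | i, [] => by simp [cyclicWordFrom]
  | i, c :: t => by
      simp [cyclicWordFrom, length_cwf m a (i+1) t]

lemma getD_cwf {A : Type*} (m : ℕ) (a : ℕ → A) (d : A) : ∀ (i : ℕ) (u : List ℕ) (n : ℕ),
    n < u.sum → (cyclicWordFrom m a i u).getD n d = a ((i + Pb u n) % m)
  | i, [], n, h => by simp at h
  | i, c :: t, n, h => by
      rw [cyclicWordFrom]
      by_cases hn : n < c
      · rw [List.getD_append _ _ _ _ (by simpa using hn)]
        simp [Pb, hn]
      · rw [List.getD_append_right _ _ _ _ (by simp; omega)]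
        simp only [List.length_replicate]
        have hrec := getD_cwf m a d (i+1) t (n - c) (by simp at h; omega)
        rw [hrec]
        have : i + 1 + Pb t (n - c) = i + (Pb t (n-c) + 1) := by omega
        rw [this]
        simp [Pb, hn]

lemma Pb_lt : ∀ (u : List ℕ) (n : ℕ), n < u.sum → Pb u n < u.length
  | [], n, h => by simp at h
  | c :: t, n, h => by
      by_cases hn : n < c
      · simp [Pb, hn]
      · simp only [Pb, if_neg hn, List.length_cons]
        have := Pb_lt t (n - c) (by simp at h; omega)
        omega

lemma sig_char : ∀ (u : List ℕ) (n : ℕ), n < u.sum →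
    sig u (Pb u n) ≤ n ∧ n < sig u (Pb u n + 1)
  | [], n, h => by simp at h
  | c :: t, n, h => by
      by_cases hn : n < c
      · simp [Pb, hn]
      · simp only [Pb, if_neg hn, sig_cons]
        have := sig_char t (n - c) (by simp at h; omega)
        constructor <;> omega

lemma Pb_inv : ∀ (u : List ℕ) (n b : ℕ), n < u.sum → sig u b ≤ n → n < sig u (b+1) →
    Pb u n = b := by
  intro u n b h h1 h2
  have hc := sig_char u n h
  rcases Nat.lt_trichotomy (Pb u n) b with hlt | he | hgt
  · have : sig u (Pb u n + 1) ≤ sig u b := sig_mono u hlt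
    omega
  · exact he
  · have : sig u (b+1) ≤ sig u (Pb u n) := sig_mono u hgt
    omega

lemma Pb_mono (u : List ℕ) {n n' : ℕ} (h : n ≤ n') (h' : n' < u.sum) : Pb u n ≤ Pb u n' := by
  have hn : n < u.sum := by omega
  have c1 := sig_char u n hn
  have c2 := sig_char u n' h'
  by_contra hc
  have : sig u (Pb u n' + 1) ≤ sig u (Pb u n) := sig_mono u (by omega)
  omega

lemma Pb_step (u : List ℕ) (hpos : ∀ b, b < u.length → 1 ≤ u.getD b 0) {n : ℕ}
    (h : n + 1 < u.sum) :
    Pb u (n+1) = Pb u n ∨ Pb u (n+1) = Pb u n + 1 := by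
  have hn : n < u.sum := by omega
  have c1 := sig_char u n hn
  have c2 := sig_char u (n+1) h
  have hm := Pb_mono u (by omega : n ≤ n + 1) h
  by_cases he : Pb u (n+1) = Pb u n
  · left; exact he
  · right
    by_contra hne
    have hlen : Pb u n + 1 < u.length := by
      have := Pb_lt u (n+1) h; omega
    have e1 : sig u (Pb u n + 1 + 1) ≤ sig u (Pb u (n+1)) := sig_mono u (by omega)
    have e2 := sig_succ u (Pb u n + 1) hlen
    have e3 : 1 ≤ u.getD (Pb u n + 1) 0 := hpos _ hlen
    omega

lemma Pb_add3 (u : List ℕ) (h3 : ∀ b, b < u.length → u.getD b 0 ≤ 3) {n : ℕ}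
    (h : n + 3 < u.sum) : Pb u n < Pb u (n+3) := by
  have hn : n < u.sum := by omega
  have hm := Pb_mono u (by omega : n ≤ n+3) h
  by_contra hc
  have he : Pb u (n+3) = Pb u n := by omega
  have c1 := sig_char u n hn
  have c2 := sig_char u (n+3) h
  have hlen := Pb_lt u n hn
  have e2 := sig_succ u (Pb u n) hlen
  have e3 := h3 _ hlen
  rw [he] at c2
  omega

lemma Pb_boundary (u : List ℕ) {m b : ℕ} (hm : m + 1 < u.sum) (h1 : Pb u m = b)
    (h2 : Pb u (m+1) = b + 1) : sig u (b+1) = m+1 := by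
  have c1 := sig_char u m (by omega)
  have c2 := sig_char u (m+1) hm
  rw [h1] at c1; rw [h2] at c2
  omega

lemma Pb_start (u : List ℕ) (hpos : ∀ b, b < u.length → 1 ≤ u.getD b 0) {b : ℕ} (hb1 : 1 ≤ b)
    (hbN : b < u.length) (hS : sig u b < u.sum) :
    Pb u (sig u b) = b ∧ Pb u (sig u b - 1) = b - 1 := by
  have e1 := sig_succ u b hbN
  have e2 := sig_succ u (b-1) (by omega)
  have hb : b - 1 + 1 = b := by omega
  rw [hb] at e2
  have h1 := hpos b hbN
  have h2 := hpos (b-1) (by omega)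
  refine ⟨Pb_inv u _ b hS (le_refl _) (by omega), ?_⟩
  apply Pb_inv u _ _ (by omega) (by omega) (by rw [hb]; omega)

lemma infix_getD {A : Type*} {F w : List A} (h : F <:+: w) (d : A) :
    ∃ q, q + F.length ≤ w.length ∧ ∀ i, i < F.length → w.getD (q+i) d = F.getD i d := by
  obtain ⟨s, t, hst⟩ := h
  refine ⟨s.length, ?_, ?_⟩
  · rw [← hst]; simp only [List.length_append]; omega
  · intro i hi
    rw [← hst, List.append_assoc, List.getD_append_right _ _ _ _ (by omega),
      List.getD_append _ _ _ _ (by simpa using hi)]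
    congr 1
    omega

section CW

variable {A : Type*} (a : ℕ → A) (ha : Set.InjOn a (Set.Iio 5)) (u : List ℕ)
  (hpos : ∀ b, b < u.length → 1 ≤ u.getD b 0) (d : A)

lemma cw_getD {n : ℕ} (hn : n < u.sum) :
    (cyclicWordFrom 5 a 0 u).getD n d = a (Pb u n % 5) := by
  rw [getD_cwf 5 a d 0 u n hn]
  simp

include ha hpos in
lemma pair_lemma {z : List A} (hz : z <:+: cyclicWordFrom 5 a 0 u) {i : ℕ}
    (hi : i + 1 < z.length) :
    ∃ g, g < 5 ∧ z.getD i d = a g ∧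
      (z.getD (i+1) d = a g ∨ z.getD (i+1) d = a ((g+1) % 5)) := by
  obtain ⟨q, hq, hg⟩ := infix_getD hz d
  rw [length_cwf] at hq
  have hn1 : q + i + 1 < u.sum := by omega
  have hn : q + i < u.sum := by omega
  refine ⟨Pb u (q+i) % 5, by omega, ?_, ?_⟩
  · rw [← hg i (by omega), cw_getD a u d hn]
  · rw [← hg (i+1) hi, show q + (i+1) = (q+i)+1 by omega, cw_getD a u d hn1]
    rcases Pb_step u hpos hn1 with h | h
    · left; rw [h]
    · right; rw [h]
      congr 1
      omega

include ha hpos in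
lemma const_lemma {z : List A} (hz : z <:+: cyclicWordFrom 5 a 0 u)
    (hzr : z.reverse <:+: cyclicWordFrom 5 a 0 u) :
    ∀ i, i < z.length → z.getD i d = z.getD 0 d := by
  have adj : ∀ i, i + 1 < z.length → z.getD (i+1) d = z.getD i d := by
    intro i hi
    by_contra hne
    obtain ⟨g, hg5, hgi, hgi1⟩ := pair_lemma a ha u hpos d hz hi
    have hrl : z.reverse.length = z.length := z.length_reverse
    have hrev : ∀ j, j < z.length → z.reverse.getD j d = z.getD (z.length - 1 - j) d := by
      intro j hj
      rw [List.getD_eq_getElem _ _ (by omega), List.getD_eq_getElem _ _ (by omega)]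
      exact List.getElem_reverse _
    obtain ⟨c, hc5, hci, hci1⟩ := pair_lemma a ha u hpos d hzr
      (i := z.length - 2 - i) (by omega)
    rw [hrev _ (by omega), show z.length - 1 - (z.length - 2 - i) = i + 1 by omega] at hci
    rw [hrev _ (by omega), show z.length - 1 - (z.length - 2 - i + 1) = i by omega] at hci1
    -- z i+1 = a c ; z i = a c or a ((c+1)%5) ; z i = a g ; z i+1 = a g or a ((g+1)%5)
    have hgi1' : z.getD (i+1) d = a ((g+1) % 5) := by
      rcases hgi1 with h | h
      · exact absurd (h.trans hgi.symm) hne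
      · exact h
    have e1 : c = (g+1) % 5 := ha (by simp [Set.mem_Iio]; omega) (by simp [Set.mem_Iio]; omega)
      (hci.symm.trans hgi1')
    rcases hci1 with h | h
    · have : g = c := ha (by simp [Set.mem_Iio]; omega) (by simp [Set.mem_Iio]; omega)
        (hgi.symm.trans h)
      omega
    · have : g = (c+1) % 5 := ha (by simp [Set.mem_Iio]; omega) (by simp [Set.mem_Iio]; omega)
        (hgi.symm.trans h)
      omega
  intro i
  induction i with
  | zero => intro _; rfl
  | succ n ihn => intro h; rw [adj n h, ihn (by omega)]

include ha hpos in
lemma P_const {l len : ℕ} (hl : l + len ≤ u.sum)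
    (hc : ∀ i, i < len → (cyclicWordFrom 5 a 0 u).getD (l+i) d = (cyclicWordFrom 5 a 0 u).getD l d) :
    ∀ i, i < len → Pb u (l+i) = Pb u l := by
  intro i
  induction i with
  | zero => intro _; rfl
  | succ n ihn =>
      intro h
      have ih := ihn (by omega)
      have hs : Pb u (l+n+1) = Pb u (l+n) ∨ Pb u (l+n+1) = Pb u (l+n) + 1 :=
        Pb_step u hpos (by omega)
      have hlen : ∀ m, m < len → l + m < u.sum := by omega
      have hc1 := hc (n+1) h
      have hc0 : (cyclicWordFrom 5 a 0 u).getD l d = a (Pb u l % 5) :=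
        cw_getD a u d (by omega)
      rw [show l + (n+1) = l + n + 1 by omega, cw_getD a u d (by omega), hc0] at hc1
      have hmod : Pb u (l+n+1) % 5 = Pb u l % 5 :=
        ha (by simp [Set.mem_Iio]; omega) (by simp [Set.mem_Iio]; omega) hc1
      rw [show l + (n+1) = l + n + 1 by omega]
      rcases hs with hs | hs
      · rw [hs, ih]
      · rw [hs, ih] at hmod ⊢
        omega

end CW


/-- Let `k ≥ 2` and let `u` be obtained from `ρ^k(2)` by replacing some
(possibly zero) occurrences of the letter `2` by the letter `3`.  Then the 5-cyclic
`u`-word `C₅(u)` avoids `φ₂`. -/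
theorem cyclicWord_replaced_avoids {A : Type*} (a : ℕ → A) (ha : Set.InjOn a (Set.Iio 5))
    (k : ℕ) (hk : 2 ≤ k) (u : List ℕ)
    (hu : List.Forall₂ (fun x y => y = x ∨ (x = 2 ∧ y = 3)) (rhoWord^[k] [2]) u) :
    Avoids 2 (cyclicWord 5 a u) := by
  rintro ⟨X, Ys, hYlen, hXne, hYne, hinf, hrev⟩
  obtain ⟨Y1, Y2, rfl⟩ := List.length_eq_two.mp hYlen
  -- element facts about u
  have uv : ∀ b, b < u.length →
      (1 ≤ u.getD b 0 ∧ u.getD b 0 ≤ 3 ∧ (u.getD b 0 = 1 ↔ Vfp b = 1)) := by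
    intro b hb
    rw [rho_iter] at hu
    have hlen := hu.length_eq
    simp only [List.length_map, List.length_range] at hlen
    have hb1 : b < ((List.range (2^k)).map Vfp).length := by
      simp only [List.length_map, List.length_range]; omega
    have hR := (List.forall₂_iff_get.mp hu).2 b hb1 hb
    simp only [List.get_eq_getElem, List.getElem_map, List.getElem_range] at hR
    have hgd : u.getD b 0 = u[b] := List.getD_eq_getElem u 0 hb
    rcases hR with h | ⟨h2, h3⟩
    · rw [hgd, h]
      rcases Vfp_mem b with e | e <;> rw [e] <;> simp
    · rw [hgd, h3, h2]
      simp
  have hpos : ∀ b, b < u.length → 1 ≤ u.getD b 0 := fun b hb => (uv b hb).1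
  have hle3 : ∀ b, b < u.length → u.getD b 0 ≤ 3 := fun b hb => (uv b hb).2.1
  -- w basics
  have hfl : List.flatten [Y1, Y2] = Y1 ++ Y2 := by simp
  rw [hfl] at hinf
  have hY1w : Y1 <:+: cyclicWord 5 a u := by
    refine List.IsInfix.trans ?_ hinf
    exact ⟨X, Y2 ++ X, by simp [List.append_assoc]⟩
  have hY2w : Y2 <:+: cyclicWord 5 a u := by
    refine List.IsInfix.trans ?_ hinf
    exact ⟨X ++ Y1, X, by simp [List.append_assoc]⟩
  obtain ⟨q, hq, hF⟩ := infix_getD hinf (a 0)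
  have hlw : (cyclicWord 5 a u).length = u.sum := length_cwf 5 a 0 u
  set x := X.length with hxdef
  set e1 := Y1.length with he1def
  set e2 := Y2.length with he2def
  have hx : 1 ≤ x := List.length_pos_iff.mpr hXne
  have he1 : 1 ≤ e1 := List.length_pos_iff.mpr (hYne Y1 (by simp))
  have he2 : 1 ≤ e2 := List.length_pos_iff.mpr (hYne Y2 (by simp))
  have hFlen : (X ++ (Y1 ++ Y2) ++ X).length = x + (e1 + e2) + x := by
    simp only [List.length_append]; try omega
  set Δ := x + (e1 + e2) with hΔdef
  have hSS : q + Δ + x ≤ u.sum := by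
    rw [hFlen, hlw] at hq; omega
  have hwg : ∀ n, n < u.sum → (cyclicWord 5 a u).getD n (a 0) = a (Pb u n % 5) :=
    fun n hn => cw_getD a u (a 0) hn
  -- getD components of F
  have gX1 : ∀ i, i < x → (X ++ (Y1 ++ Y2) ++ X).getD i (a 0) = X.getD i (a 0) := by
    intro i hi
    rw [List.getD_append _ _ _ _ (by simp [List.length_append]; omega),
      List.getD_append _ _ _ _ (by omega)]
  have gX2 : ∀ i, i < x → (X ++ (Y1 ++ Y2) ++ X).getD (Δ + i) (a 0) = X.getD i (a 0) := by
    intro i hi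
    rw [List.getD_append_right _ _ _ _ (by simp only [List.length_append]; omega)]
    have e : Δ + i - (X ++ (Y1 ++ Y2)).length = i := by
      simp only [List.length_append]; try omega
    rw [e]
  have gY1 : ∀ i, i < e1 → (X ++ (Y1 ++ Y2) ++ X).getD (x + i) (a 0) = Y1.getD i (a 0) := by
    intro i hi
    rw [List.getD_append _ _ _ _ (by simp [List.length_append]; omega),
      List.getD_append_right _ _ _ _ (by omega)]
    rw [show x + i - X.length = i by omega]
    rw [List.getD_append _ _ _ _ (by omega)]
  have gY2 : ∀ i, i < e2 →
      (X ++ (Y1 ++ Y2) ++ X).getD (x + e1 + i) (a 0) = Y2.getD i (a 0) := by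
    intro i hi
    rw [List.getD_append _ _ _ _ (by simp [List.length_append]; omega),
      List.getD_append_right _ _ _ _ (by omega)]
    rw [show x + e1 + i - X.length = e1 + i by omega]
    rw [List.getD_append_right _ _ _ _ (by omega)]
    congr 1
    omega
  -- copies of X force congruence of block indices mod 5
  have hcopy : ∀ i, i < x → Pb u (q + i) % 5 = Pb u (q + Δ + i) % 5 := by
    intro i hi
    have h1 := hF i (by omega)
    have h2 := hF (Δ + i) (by omega)
    rw [gX1 i hi] at h1
    rw [gX2 i hi] at h2
    have h3 : (cyclicWord 5 a u).getD (q + i) (a 0)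
        = (cyclicWord 5 a u).getD (q + (Δ + i)) (a 0) := h1.trans h2.symm
    rw [hwg _ (by omega), hwg _ (by omega), show q + (Δ + i) = q + Δ + i by omega] at h3
    exact ha (by simp [Set.mem_Iio]; omega) (by simp [Set.mem_Iio]; omega) h3
  -- the shift D of block indices between the two copies of X
  have hmono0 : Pb u q ≤ Pb u (q + Δ) := Pb_mono u (by omega) (by omega)
  obtain ⟨D, hD⟩ : ∃ D, Pb u (q + Δ) = Pb u q + D := ⟨_, (Nat.add_sub_cancel' hmono0).symm⟩
  have hdelta : ∀ i, i < x → Pb u (q + Δ + i) = Pb u (q + i) + D := by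
    intro i
    induction i with
    | zero => intro _; simpa using hD
    | succ n ihn =>
        intro h
        have ih := ihn (by omega)
        have s1 := Pb_step u hpos (n := q + n) (by omega)
        have s2 := Pb_step u hpos (n := q + Δ + n) (by omega)
        have m1 := hcopy n (by omega)
        have m2 := hcopy (n+1) h
        rw [show q + (n+1) = q + n + 1 by omega, show q + Δ + (n+1) = q + Δ + n + 1 by omega]
          at m2 ⊢
        omega
  have hD5 : D % 5 = 0 := by
    have := hcopy 0 (by omega)
    simp only [Nat.add_zero] at this
    omega
  have hD1 : 1 ≤ D := by
    have h3 := Pb_add3 u hle3 (n := q) (by omega)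
    have hm := Pb_mono u (show q + 3 ≤ q + Δ by omega) (by omega)
    omega
  obtain ⟨aa, rfl⟩ : ∃ aa, D = 5 * aa := ⟨D / 5, by omega⟩
  have haa : 1 ≤ aa := by omega
  -- Y1 and Y2 are constant words, so Pb is constant on their ranges
  have hcY1 := const_lemma a ha u hpos (a 0) hY1w (hrev Y1 (by simp))
  have hcY2 := const_lemma a ha u hpos (a 0) hY2w (hrev Y2 (by simp))
  have hwc1 : ∀ i, i < e1 → (cyclicWord 5 a u).getD (q + x + i) (a 0)
      = (cyclicWord 5 a u).getD (q + x) (a 0) := by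
    intro i hi
    have h1 := hF (x + i) (by omega)
    have h0 := hF (x + 0) (by omega)
    rw [gY1 i hi] at h1
    rw [gY1 0 (by omega)] at h0
    rw [show q + (x + i) = q + x + i by omega] at h1
    rw [show q + (x + 0) = q + x by omega] at h0
    rw [h1, h0, hcY1 i (by omega)]
  have hwc2 : ∀ i, i < e2 → (cyclicWord 5 a u).getD (q + x + e1 + i) (a 0)
      = (cyclicWord 5 a u).getD (q + x + e1) (a 0) := by
    intro i hi
    have h1 := hF (x + e1 + i) (by omega)
    have h0 := hF (x + e1 + 0) (by omega)
    rw [gY2 i hi] at h1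
    rw [gY2 0 (by omega)] at h0
    rw [show q + (x + e1 + i) = q + x + e1 + i by omega] at h1
    rw [show q + (x + e1 + 0) = q + x + e1 by omega] at h0
    rw [h1, h0, hcY2 i (by omega)]
  have hPc1 : ∀ i, i < e1 → Pb u (q + x + i) = Pb u (q + x) :=
    P_const a ha u hpos (a 0) (by omega) hwc1
  have hPc2 : ∀ i, i < e2 → Pb u (q + x + e1 + i) = Pb u (q + x + e1) :=
    P_const a ha u hpos (a 0) (by omega) hwc2
  -- chain of block values across the middle
  have hcc : Pb u (q + Δ - 1) ≤ Pb u (q + x) + 1 := by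
    have h1 : Pb u (q + x + (e1 - 1)) = Pb u (q + x) := hPc1 (e1 - 1) (by omega)
    have h2 : Pb u (q + x + e1 + (e2 - 1)) = Pb u (q + x + e1) := hPc2 (e2 - 1) (by omega)
    have h3 := Pb_step u hpos (n := q + x + (e1 - 1)) (by omega)
    rw [show q + x + (e1 - 1) + 1 = q + x + e1 by omega] at h3
    rw [show q + x + e1 + (e2 - 1) = q + Δ - 1 by omega] at h2
    omega
  have s4 : Pb u (q + Δ) ≤ Pb u (q + Δ - 1) + 1 ∧ Pb u (q + Δ - 1) ≤ Pb u (q + Δ) := by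
    have h1 := Pb_step u hpos (n := q + Δ - 1) (by omega)
    rw [show q + Δ - 1 + 1 = q + Δ by omega] at h1
    constructor
    · omega
    · exact Pb_mono u (by omega) (by omega)
  have s5 : Pb u (q + x - 1) ≤ Pb u (q + x) ∧ Pb u (q + x) ≤ Pb u (q + x - 1) + 1 := by
    have h1 := Pb_step u hpos (n := q + x - 1) (by omega)
    rw [show q + x - 1 + 1 = q + x by omega] at h1
    exact ⟨by omega, by omega⟩
  have s6 : Pb u (q + x) ≤ Pb u (q + Δ - 1) := by
    have h1 : Pb u (q + x + 0) = Pb u (q + x) := hPc1 0 (by omega)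
    exact Pb_mono u (by omega) (by omega)
  set b0 := Pb u q with hb0def
  set b1 := Pb u (q + x - 1) with hb1def
  have hb1N : b1 < u.length := Pb_lt u _ (by omega)
  have hchq := sig_char u q (by omega)
  rw [← hb0def] at hchq
  have hchx1 := sig_char u (q + x - 1) (by omega)
  rw [← hb1def] at hchx1
  have hmono01 : b0 ≤ b1 := by
    rcases Nat.eq_or_lt_of_le hx with h | h
    · rw [hb0def, hb1def, show q + x - 1 = q by omega]
    · exact Pb_mono u (by omega) (by omega)
  -- d ≥ 1 : the middle cannot stay inside one block
  have hd_low : b1 + 1 ≤ b0 + 5 * aa := by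
    by_contra hcon
    have he : b1 = Pb u (q + Δ) := by
      have := Pb_mono u (show q + x - 1 ≤ q + Δ by omega) (by omega)
      omega
    have c2 := sig_char u (q + Δ) (by omega)
    rw [← he] at c2
    have e2' := sig_succ u b1 hb1N
    have e3 := hle3 b1 hb1N
    omega
  have hd_high : b0 + 5 * aa ≤ b1 + 3 := by omega
  have hb1b0 : b0 + 2 ≤ b1 := by omega
  have hPqDN : b0 + 5 * aa < u.length := by
    have := Pb_lt u (q + Δ) (by omega)
    omega
  have hB1D : Pb u (q + Δ + (x - 1)) = b1 + 5 * aa := by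
    have h := hdelta (x - 1) (by omega)
    rw [show q + (x - 1) = q + x - 1 by omega] at h
    omega
  have hB1DN : b1 + 5 * aa < u.length := by
    have := Pb_lt u (q + Δ + (x - 1)) (by omega)
    omega
  -- Fact A : interior blocks repeat with shift 5*aa
  have factA : ∀ b, b0 < b → b < b1 → u.getD b 0 = u.getD (b + 5 * aa) 0 := by
    intro b hbl hbr
    have hbN : b < u.length := by omega
    have h1 : q < sig u b := by
      have := sig_mono u (show b0 + 1 ≤ b by omega)
      omega
    have h2 : sig u (b + 1) ≤ q + x - 1 := by
      have := sig_mono u (show b + 1 ≤ b1 by omega)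
      omega
    have h3 : sig u b ≤ sig u (b + 1) := sig_mono u (by omega)
    obtain ⟨p1, p2⟩ := Pb_start u hpos (show 1 ≤ b by omega) hbN (by omega)
    obtain ⟨p3, p4⟩ := Pb_start u hpos (show 1 ≤ b + 1 by omega) (by omega) (by omega)
    rw [show b + 1 - 1 = b by omega] at p4
    have d1 := hdelta (sig u b - q) (by omega)
    rw [show q + (sig u b - q) = sig u b by omega, p1,
      show q + Δ + (sig u b - q) = sig u b + Δ by omega] at d1
    have d2 := hdelta (sig u b - q - 1) (by omega)
    rw [show q + (sig u b - q - 1) = sig u b - 1 by omega, p2,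
      show q + Δ + (sig u b - q - 1) = sig u b + Δ - 1 by omega] at d2
    have q2' : Pb u (sig u b + Δ - 1 + 1) = b - 1 + 5 * aa + 1 := by
      rw [show sig u b + Δ - 1 + 1 = sig u b + Δ by omega]
      omega
    have bd1 := Pb_boundary u (m := sig u b + Δ - 1) (by omega) d2 q2'
    rw [show b - 1 + 5 * aa + 1 = b + 5 * aa by omega] at bd1
    have d3 := hdelta (sig u (b + 1) - q) (by omega)
    rw [show q + (sig u (b + 1) - q) = sig u (b + 1) by omega, p3,
      show q + Δ + (sig u (b + 1) - q) = sig u (b + 1) + Δ by omega] at d3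
    have d4 := hdelta (sig u (b + 1) - q - 1) (by omega)
    rw [show q + (sig u (b + 1) - q - 1) = sig u (b + 1) - 1 by omega, p4,
      show q + Δ + (sig u (b + 1) - q - 1) = sig u (b + 1) + Δ - 1 by omega] at d4
    have q4' : Pb u (sig u (b + 1) + Δ - 1 + 1) = b + 5 * aa + 1 := by
      rw [show sig u (b + 1) + Δ - 1 + 1 = sig u (b + 1) + Δ by omega]
      omega
    have bd2 := Pb_boundary u (m := sig u (b + 1) + Δ - 1) (by omega) d4 q4'
    have sA := sig_succ u b hbN
    have sB := sig_succ u (b + 5 * aa) (by omega)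
    omega
  -- Fact L : left boundary
  have hb0N : b0 < u.length := by omega
  have sb0 := sig_succ u b0 hb0N
  have factL : u.getD (b0 + 5 * aa) 0 ≤ u.getD b0 0 ∨
      (Pb u (q + Δ - 1) = b0 + 5 * aa ∧ 2 ≤ u.getD (b0 + 5 * aa) 0) := by
    have hαx : sig u (b0 + 1) - q < x := by
      by_contra hc
      have hPx : Pb u (q + x - 1) = b0 := Pb_inv u _ _ (by omega) (by omega) (by omega)
      omega
    have hsig2 := sig_succ u (b0 + 1) (by omega)
    have hp1 : 1 ≤ u.getD (b0 + 1) 0 := hpos _ (by omega)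
    have pqα : Pb u (sig u (b0 + 1)) = b0 + 1 :=
      Pb_inv u _ _ (by omega) (by omega) (by omega)
    have pqα1 : Pb u (sig u (b0 + 1) - 1) = b0 := by
      have hpb0 : 1 ≤ u.getD b0 0 := hpos b0 hb0N
      exact Pb_inv u _ _ (by omega) (by omega) (by omega)
    have dα := hdelta (sig u (b0 + 1) - q) (by omega)
    rw [show q + (sig u (b0 + 1) - q) = sig u (b0 + 1) by omega, pqα,
      show q + Δ + (sig u (b0 + 1) - q) = sig u (b0 + 1) + Δ by omega] at dα
    have dα1 := hdelta (sig u (b0 + 1) - q - 1) (by omega)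
    rw [show q + (sig u (b0 + 1) - q - 1) = sig u (b0 + 1) - 1 by omega, pqα1,
      show q + Δ + (sig u (b0 + 1) - q - 1) = sig u (b0 + 1) + Δ - 1 by omega] at dα1
    have q2' : Pb u (sig u (b0 + 1) + Δ - 1 + 1) = b0 + 5 * aa + 1 := by
      rw [show sig u (b0 + 1) + Δ - 1 + 1 = sig u (b0 + 1) + Δ by omega]
      omega
    have bdL := Pb_boundary u (m := sig u (b0 + 1) + Δ - 1) (by omega) dα1 q2'
    have sD := sig_succ u (b0 + 5 * aa) hPqDN
    have chΔ := sig_char u (q + Δ) (by omega)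
    rw [hD] at chΔ
    by_cases hcs : Pb u (q + Δ - 1) = b0 + 5 * aa
    · right
      refine ⟨hcs, ?_⟩
      have chΔ1 := sig_char u (q + Δ - 1) (by omega)
      rw [hcs] at chΔ1
      omega
    · left
      have chΔ1 := sig_char u (q + Δ - 1) (by omega)
      have hlt : Pb u (q + Δ - 1) + 1 ≤ b0 + 5 * aa := by omega
      have hmm := sig_mono u hlt
      omega
  -- Fact R : right boundary
  have sB1 := sig_succ u b1 hb1N
  have factR : (Pb u (q + x) = b1 + 1 ∧ u.getD b1 0 ≤ u.getD (b1 + 5 * aa) 0) ∨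
      (Pb u (q + x) = b1 ∧ 2 ≤ u.getD b1 0) := by
    have hq_sb1 : q < sig u b1 := by
      have := sig_mono u (show b0 + 1 ≤ b1 by omega)
      omega
    have hsb1x : sig u b1 ≤ q + x - 1 := hchx1.1
    obtain ⟨pr1, pr2⟩ := Pb_start u hpos (show 1 ≤ b1 by omega) hb1N (by omega)
    have dr1 := hdelta (sig u b1 - q) (by omega)
    rw [show q + (sig u b1 - q) = sig u b1 by omega, pr1,
      show q + Δ + (sig u b1 - q) = sig u b1 + Δ by omega] at dr1
    have dr2 := hdelta (sig u b1 - q - 1) (by omega)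
    rw [show q + (sig u b1 - q - 1) = sig u b1 - 1 by omega, pr2,
      show q + Δ + (sig u b1 - q - 1) = sig u b1 + Δ - 1 by omega] at dr2
    have qr2 : Pb u (sig u b1 + Δ - 1 + 1) = b1 - 1 + 5 * aa + 1 := by
      rw [show sig u b1 + Δ - 1 + 1 = sig u b1 + Δ by omega]
      omega
    have bdR := Pb_boundary u (m := sig u b1 + Δ - 1) (by omega) dr2 qr2
    rw [show b1 - 1 + 5 * aa + 1 = b1 + 5 * aa by omega] at bdR
    have chend := sig_char u (q + Δ + (x - 1)) (by omega)
    rw [hB1D] at chend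
    have sR := sig_succ u (b1 + 5 * aa) hB1DN
    rcases (show Pb u (q + x) = b1 ∨ Pb u (q + x) = b1 + 1 by omega) with hc | hc
    · right
      refine ⟨hc, ?_⟩
      have chx := sig_char u (q + x) (by omega)
      rw [hc] at chx
      omega
    · left
      refine ⟨hc, ?_⟩
      have hqx1 : Pb u (q + x - 1 + 1) = b1 + 1 := by
        rw [show q + x - 1 + 1 = q + x by omega]
        exact hc
      have bd := Pb_boundary u (m := q + x - 1) (by omega) hb1def.symm hqx1
      omega
  -- translate to Vfp
  have uvLe : ∀ c c', c < u.length → c' < u.length → u.getD c 0 ≤ u.getD c' 0 →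
      Vfp c ≤ Vfp c' := by
    intro c c' hc hc' hle
    rcases Vfp_mem c' with e' | e'
    · have hubc' : u.getD c' 0 = 1 := ((uv c' hc').2.2).mpr e'
      have h1 := hpos c hc
      have : Vfp c = 1 := ((uv c hc).2.2).mp (by omega)
      omega
    · have := Vfp_mem c
      omega
  have uvEq : ∀ c c', c < u.length → c' < u.length → u.getD c 0 = u.getD c' 0 →
      Vfp c = Vfp c' := by
    intro c c' hc hc' he
    rcases Vfp_mem c with e | e
    · have h1 : u.getD c 0 = 1 := ((uv c hc).2.2).mpr e
      have h2 : Vfp c' = 1 := ((uv c' hc').2.2).mp (by omega)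
      omega
    · rcases Vfp_mem c' with e' | e'
      · have h1 : u.getD c' 0 = 1 := ((uv c' hc').2.2).mpr e'
        have h2 : Vfp c = 1 := ((uv c hc).2.2).mp (by omega)
        omega
      · omega
  have factAV : ∀ b, b0 < b → b < b1 → Vfp b = Vfp (b + 5 * aa) :=
    fun b h h' => uvEq b (b + 5 * aa) (by omega) (by omega) (factA b h h')
  -- final case analysis on d = b0 + 5aa - b1 ∈ {1,2,3}
  rcases (show b0 + 5 * aa = b1 + 1 ∨ b0 + 5 * aa = b1 + 2 ∨ b0 + 5 * aa = b1 + 3 by omega)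
    with hd | hd | hd
  · exact masterM aa haa (b0 + 1)
      (le_of_eq (factAV (b0 + 1) (by omega) (by omega)).symm)
      (fun j hj1 hj2 => factAV j (by omega) (by omega))
      (le_of_eq (factAV (b0 + 1 + 5 * aa - 3) (by omega) (by omega)))
  · rcases factR with ⟨hr1, hr2⟩ | ⟨hr1, hr2⟩
    · apply masterM aa haa (b0 + 1)
      · exact le_of_eq (factAV (b0 + 1) (by omega) (by omega)).symm
      · exact fun j hj1 hj2 => factAV j (by omega) (by omega)
      · rw [show b0 + 1 + 5 * aa - 3 = b1 by omega]
        exact uvLe b1 (b1 + 5 * aa) (by omega) (by omega) hr2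
    · have hL : u.getD (b0 + 5 * aa) 0 ≤ u.getD b0 0 := by
        rcases factL with h | ⟨h1', h2'⟩
        · exact h
        · exfalso; omega
      apply masterM aa haa b0
      · exact uvLe (b0 + 5 * aa) b0 (by omega) (by omega) hL
      · exact fun j hj1 hj2 => factAV j (by omega) (by omega)
      · exact le_of_eq (factAV (b0 + 5 * aa - 3) (by omega) (by omega))
  · have hx1 : Pb u (q + x) = b1 + 1 := by omega
    have hΔ1 : Pb u (q + Δ - 1) = b1 + 2 := by omega
    have hR : u.getD b1 0 ≤ u.getD (b1 + 5 * aa) 0 := by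
      rcases factR with ⟨h1', h2'⟩ | ⟨h1', h2'⟩
      · exact h2'
      · exfalso; omega
    have hL : u.getD (b0 + 5 * aa) 0 ≤ u.getD b0 0 := by
      rcases factL with h | ⟨h1', h2'⟩
      · exact h
      · exfalso; omega
    apply masterM aa haa b0
    · exact uvLe (b0 + 5 * aa) b0 (by omega) (by omega) hL
    · exact fun j hj1 hj2 => factAV j (by omega) (by omega)
    · rw [show b0 + 5 * aa - 3 = b1 by omega]
      exact uvLe b1 (b1 + 5 * aa) (by omega) (by omega) hR
end

section
/- Fix k ≥ 1. Let d_k : {0,1,2}* → {0,1,2}* be the morphism with d_k(i) = i^{k+1} for each i ∈ {0,1,2}, and let g : {0,1,2}* → {0,1,2,a,b}* be the morphism with g(i) = i·a·b for each i ∈ {0,1,2}, where a and b are two new letters. If the formula with reversal φ_{3k} occurs in g(d_k(w)) for a word w ∈ {0,1,2}*, then w contains a square; equivalently, if w is square-free then g(d_k(w)) avoids φ_{3k}. -/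
/-!
In `g(v)` each letter of `v` is followed by `ab`, so the letter at a position determines that
position modulo 3. Hence a factor whose reversal is also a factor is a single letter, and in an
occurrence `X Z X` of `φ_{3k}` the middle part has length `3k` and `|X|` is a multiple of 3.
Reading off the letters of `v` inside `X Z X` gives a factor `u z u` of `v = d_k(w)` with
`|z| = k` and `u` nonempty. As `d_k` blows every letter of `w` up to a block of length `k + 1`,
such a repetition of period `p = |u| + k` forces a square in `w`: if `k + 1 ∣ p`, the blocks met
by the first `u` repeat with period `p / (k + 1)`; otherwise two adjacent blocks carry the same
letter.
-/

open List

section Factors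

variable {α : Type*}

theorem exists_getElem?_pair_of_infix {l : List α} {a b : α} (h : [a, b] <:+: l) :
    ∃ p, l[p]? = some a ∧ l[p + 1]? = some b := by
  obtain ⟨p, -, hp⟩ := infix_iff_getElem?.mp h
  exact ⟨p, by simpa using hp 0 (by simp), by simpa [add_comm] using hp 1 (by simp)⟩

theorem exists_getElem?_eq_of_append_append_infix {u z v : List α} (h : u ++ z ++ u <:+: v) :
    ∃ s, s + 2 * u.length + z.length ≤ v.length ∧
      ∀ j < u.length, v[s + j]? = v[s + u.length + z.length + j]? := by
  obtain ⟨s, hs, hv⟩ := infix_iff_getElem?.mp h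
  refine ⟨s, by simp only [length_append] at hs; omega, fun j hj => ?_⟩
  have h₁ := hv j (by simp; omega)
  have h₂ := hv (u.length + z.length + j) (by simp; omega)
  simp only [getElem_append, length_append] at h₁ h₂
  grind

theorem exists_append_append_infix_of_getElem?_eq {v : List α} {s m n : ℕ}
    (hs : s + 2 * m + n ≤ v.length) (h : ∀ j < m, v[s + j]? = v[s + m + n + j]?) :
    ∃ u z : List α, u.length = m ∧ z.length = n ∧ u ++ z ++ u <:+: v := by
  set u := (v.drop s).take m
  have hu : (v.drop (s + m + n)).take m = u := by
    refine ext_getElem? fun j => ?_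
    simp only [u, getElem?_take, getElem?_drop]
    split_ifs with hj
    · exact (h j hj).symm
    · rfl
  refine ⟨u, (v.drop (s + m)).take n, by simp [u]; omega, by simp; omega, ?_⟩
  have : (v.drop s).take (m + n + m) = u ++ (v.drop (s + m)).take n ++ u := by
    rw [take_add, take_add, drop_drop, drop_drop, ← Nat.add_assoc, hu]
  rw [← this]
  exact (take_prefix _ _).isInfix.trans (drop_suffix s v).isInfix

end Factors

theorem gMorph_cons (c : ℕ) (v : List ℕ) : gMorph (c :: v) = c :: 3 :: 4 :: gMorph v := rfl

theorem length_gMorph (v : List ℕ) : (gMorph v).length = 3 * v.length := by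
  induction v with
  | nil => rfl
  | cons c v ih => rw [gMorph_cons]; simp only [length_cons, ih]; ring

theorem getElem?_gMorph_mul_three (v : List ℕ) (i : ℕ) : (gMorph v)[3 * i]? = v[i]? := by
  induction v generalizing i with
  | nil => rfl
  | cons c v ih =>
    rcases i with _ | i
    · rfl
    · simpa [gMorph_cons, Nat.mul_succ] using ih i

theorem getElem?_gMorph_eq_some {v : List ℕ} {n c : ℕ} (h : (gMorph v)[n]? = some c) :
    (n % 3 = 0 ∧ c ∈ v) ∨ (n % 3 = 1 ∧ c = 3) ∨ (n % 3 = 2 ∧ c = 4) := by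
  induction v generalizing n with
  | nil => simp [gMorph] at h
  | cons a v ih =>
    rw [gMorph_cons] at h
    match n, h with
    | 0, h | 1, h | 2, h => simp only [getElem?_cons_succ, getElem?_cons_zero,
        Option.some.injEq] at h; subst h; simp
    | n + 3, h =>
      rcases ih (by simpa using h) with h' | h' | h' <;> simp_all [Nat.add_mod_right]

theorem mod_three_eq_of_getElem?_gMorph_eq {v : List ℕ} (hv : ∀ c ∈ v, c ≤ 2) {n n' c : ℕ}
    (h : (gMorph v)[n]? = some c) (h' : (gMorph v)[n']? = some c) : n % 3 = n' % 3 := by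
  have := hv c
  rcases getElem?_gMorph_eq_some h with h | h | h <;>
    rcases getElem?_gMorph_eq_some h' with h' | h' | h' <;> grind

theorem length_eq_one_of_reverse_infix_gMorph {v : List ℕ} (hv : ∀ c ∈ v, c ≤ 2) {Y : List ℕ}
    (hY : Y ≠ []) (h : Y <:+: gMorph v) (h' : Y.reverse <:+: gMorph v) : Y.length = 1 := by
  match Y, hY with
  | [_], _ => rfl
  | a :: b :: Y, _ =>
    obtain ⟨p, hpa, hpb⟩ := exists_getElem?_pair_of_infix
      ((prefix_append [a, b] Y).isInfix.trans h)
    obtain ⟨q, hqb, hqa⟩ := exists_getElem?_pair_of_infix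
      ((by simp : [b, a] <:+ (a :: b :: Y).reverse).isInfix.trans h')
    have := mod_three_eq_of_getElem?_gMorph_eq hv hpa hqa
    have := mod_three_eq_of_getElem?_gMorph_eq hv hpb hqb
    omega

theorem exists_append_append_infix_of_infix_gMorph {v : List ℕ} (hv : ∀ c ∈ v, c ≤ 2) {k : ℕ}
    {X Z : List ℕ} (hX : X ≠ []) (hZ : Z.length = 3 * k) (h : X ++ Z ++ X <:+: gMorph v) :
    ∃ u z : List ℕ, u ≠ [] ∧ z.length = k ∧ u ++ z ++ u <:+: v := by
  obtain ⟨s, hs, hper⟩ := exists_getElem?_eq_of_append_append_infix h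
  rw [hZ, length_gMorph] at hs
  rw [hZ] at hper
  have hL : 0 < X.length := length_pos_iff.mpr hX
  have hL3 : X.length % 3 = 0 := by
    have hc := getElem?_eq_getElem (l := gMorph v) (i := s) (by rw [length_gMorph]; omega)
    have hc' := (hper 0 hL).symm.trans hc
    have := mod_three_eq_of_getElem?_gMorph_eq hv hc hc'
    omega
  set q := (s + 2) / 3
  have hq : ∀ j < X.length / 3, v[q + j]? = v[q + X.length / 3 + k + j]? := by
    intro j hj
    have := hper (3 * (q + j) - s) (by omega)
    rwa [show s + (3 * (q + j) - s) = 3 * (q + j) by omega,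
      show s + X.length + 3 * k + (3 * (q + j) - s) = 3 * (q + X.length / 3 + k + j) by omega,
      getElem?_gMorph_mul_three, getElem?_gMorph_mul_three] at this
  obtain ⟨u, z, hu, hz, huzu⟩ := exists_append_append_infix_of_getElem?_eq (by omega) hq
  exact ⟨u, z, ne_nil_of_length_pos (by omega), hz, huzu⟩

theorem exists_square_of_blockwise_period {α : Type*} {f : ℕ → α} {k s m : ℕ} (hm : 0 < m)
    (h : ∀ j < m, f ((s + j) / (k + 1)) = f ((s + m + k + j) / (k + 1))) :
    ∃ b e, 0 < e ∧ (k + 1) * (b + 2 * e) ≤ s + 2 * m + 2 * k ∧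
      ∀ t < e, f (b + t) = f (b + e + t) := by
  have hK : 0 < k + 1 := k.succ_pos
  set b := s / (k + 1)
  have hb : (k + 1) * b ≤ s := Nat.mul_div_le s (k + 1)
  have hb' : s < (k + 1) * b + (k + 1) := by
    have := Nat.lt_mul_div_succ s hK
    rwa [mul_add_one] at this
  by_cases hdvd : k + 1 ∣ m + k
  · obtain ⟨e, he⟩ := hdvd
    have he0 : 0 < e := Nat.pos_of_ne_zero (by rintro rfl; omega)
    refine ⟨b, e, he0, by rw [mul_add, mul_left_comm]; omega, fun t ht => ?_⟩
    have hbt : (k + 1) * (b + t) = (k + 1) * b + (k + 1) * t := mul_add _ _ _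
    have hte : (k + 1) * (t + 1) ≤ (k + 1) * e := Nat.mul_le_mul_left _ ht
    rw [mul_add_one] at hte
    have ht0 : (k + 1) * t = 0 ∨ k + 1 ≤ (k + 1) * t := by
      rcases Nat.eq_zero_or_pos t with rfl | ht0
      · exact Or.inl (mul_zero _)
      · exact Or.inr (Nat.le_mul_of_pos_right _ ht0)
    have hx : (s + ((k + 1) * (b + t) - s)) / (k + 1) = b + t := by
      refine Nat.div_eq_of_lt_le ?_ ?_
      · rw [hbt, show (b + t) * (k + 1) = (k + 1) * b + (k + 1) * t by ring]; omega
      · rw [hbt, show (b + t + 1) * (k + 1) = (k + 1) * b + (k + 1) * t + (k + 1) by ring]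
        omega
    have := h _ (show (k + 1) * (b + t) - s < m by omega)
    rwa [show s + m + k + ((k + 1) * (b + t) - s) = s + ((k + 1) * (b + t) - s) + (k + 1) * e by
      omega, Nat.add_mul_div_left _ _ hK, hx, add_right_comm] at this
  · refine ⟨b, 1, one_pos, by rw [mul_add]; omega, fun t ht => ?_⟩
    obtain rfl : t = 0 := by omega
    rw [add_zero, add_zero]
    by_cases hr : s + m ≤ (k + 1) * b + (k + 1)
    · have hnext : (s + m + k) / (k + 1) = b + 1 :=
        Nat.div_eq_of_lt_le (by rw [add_one_mul, mul_comm]; omega)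
          (by rw [show (b + 1 + 1) * (k + 1) = (k + 1) * b + 2 * (k + 1) by ring]; omega)
      simpa only [add_zero, hnext] using h 0 hm
    · -- the first block boundary after `s` lies strictly inside the window
      set j := (k + 1) * b + k - s
      have hj : s + j = (k + 1) * b + k := by omega
      have hlast : (s + j) / (k + 1) = b :=
        Nat.div_eq_of_lt_le (by rw [mul_comm]; omega)
          (by rw [hj, show (b + 1) * (k + 1) = (k + 1) * b + (k + 1) by ring]; omega)
      have hfirst : (s + (j + 1)) / (k + 1) = b + 1 :=
        Nat.div_eq_of_lt_le (by rw [add_one_mul, mul_comm]; omega)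
          (by rw [show (b + 1 + 1) * (k + 1) = (k + 1) * b + 2 * (k + 1) by ring]; omega)
      have hsame : (s + m + k + (j + 1)) / (k + 1) = (s + m + k + j) / (k + 1) := by
        rw [← add_assoc, Nat.succ_div, if_neg, add_zero]
        rw [show s + m + k + j + 1 = (k + 1) * (b + 1) + (m + k) by rw [mul_add_one]; omega]
        exact fun hd => hdvd ((Nat.dvd_add_right (dvd_mul_right _ _)).mp hd)
      have h₁ := h j (by omega)
      have h₂ := h (j + 1) (by omega)
      rw [hlast] at h₁
      rw [hfirst, hsame] at h₂
      exact h₁.trans h₂.symm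

theorem dMorph_cons (k c : ℕ) (w : List ℕ) :
    dMorph k (c :: w) = replicate (k + 1) c ++ dMorph k w := rfl

theorem length_dMorph (k : ℕ) (w : List ℕ) : (dMorph k w).length = (k + 1) * w.length := by
  induction w with
  | nil => rfl
  | cons c w ih => rw [dMorph_cons, length_append, length_replicate, ih, length_cons]; ring

theorem getElem?_dMorph (k : ℕ) (w : List ℕ) (x : ℕ) : (dMorph k w)[x]? = w[x / (k + 1)]? := by
  induction w generalizing x with
  | nil => rfl
  | cons c w ih =>
    rw [dMorph_cons]
    by_cases hx : x < k + 1
    · rw [getElem?_append_left (by simpa using hx), Nat.div_eq_of_lt hx]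
      simp [hx]
    · rw [getElem?_append_right (by simp; omega), length_replicate, ih,
        Nat.div_eq_sub_div (a := x) k.succ_pos (by omega), getElem?_cons_succ]

theorem not_squareFree_of_append_append_infix_dMorph {k : ℕ} {u z w : List ℕ} (hu : u ≠ [])
    (hz : z.length = k) (h : u ++ z ++ u <:+: dMorph k w) : ¬ SquareFree w := by
  intro hsf
  obtain ⟨s, hs, hper⟩ := exists_getElem?_eq_of_append_append_infix h
  rw [hz, length_dMorph] at hs
  simp only [hz, getElem?_dMorph] at hper
  obtain ⟨b, e, he, hbe, hsq⟩ :=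
    exists_square_of_blockwise_period (f := (w[·]?)) (length_pos_iff.mpr hu) hper
  have hlen : b + 2 * e ≤ w.length := by
    have : (k + 1) * (b + 2 * e) < (k + 1) * (w.length + 1) := by rw [mul_add_one]; omega
    exact Nat.lt_succ_iff.mp (Nat.lt_of_mul_lt_mul_left this)
  obtain ⟨v, y, hv, hy, hvyv⟩ :=
    exists_append_append_infix_of_getElem?_eq (n := 0) (by omega) (by simpa using hsq)
  rw [length_eq_zero_iff.mp hy, append_nil] at hvyv
  exact hsf v (ne_nil_of_length_pos (by omega)) hvyv

theorem gMorph_dMorph_avoids_general (k : ℕ) (w : List ℕ) (hw : ∀ c ∈ w, c ≤ 2)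
    (hsf : SquareFree w) : Avoids (3 * k) (gMorph (dMorph k w)) := by
  rintro ⟨X, Ys, hlen, hX, hYs, hinf, hrev⟩
  have hv : ∀ c ∈ dMorph k w, c ≤ 2 := by
    simp only [dMorph, mem_flatMap, mem_replicate]
    rintro c ⟨i, hi, -, rfl⟩
    exact hw c hi
  have hY : ∀ Y ∈ Ys, Y.length = 1 := fun Y hY =>
    length_eq_one_of_reverse_infix_gMorph hv (hYs Y hY)
      ((infix_of_mem_flatten hY).trans ((infix_append X _ X).trans hinf)) (hrev Y hY)
  have hZ : Ys.flatten.length = 3 * k := by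
    rw [length_flatten, map_congr_left hY, map_const', sum_replicate, hlen, smul_eq_mul, mul_one]
  obtain ⟨u, z, hu, hz, h⟩ := exists_append_append_infix_of_infix_gMorph hv hX hZ hinf
  exact not_squareFree_of_append_append_infix_dMorph hu hz h hsf

/-- For `k ≥ 1`, if `w ∈ {0,1,2}*` is square-free then `g(d_k(w))`
avoids `φ_{3k}` (equivalently, if `φ_{3k}` occurs in `g(d_k(w))` then `w` has a square). -/
theorem gMorph_dMorph_avoids (k : ℕ) (hk : 1 ≤ k) (w : List ℕ) (hw : ∀ c ∈ w, c ≤ 2)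
    (hsf : SquareFree w) : Avoids (3 * k) (gMorph (dMorph k w)) :=
  gMorph_dMorph_avoids_general k w hw hsf
end

section
/- For every integer k ≥ 1, the formula with reversal φ_{3k} is 5-avoidable: there are infinitely many finite words over a 5-letter alphabet that avoid φ_{3k}. -/
/-!
The witnesses are the prefixes of `g (d_k (v))`, where `v` is the square-free ternary word that
codes consecutive pairs of the overlap-free Thue–Morse word. The markers `a, b` inserted by `g`
reveal every position modulo `3`, so no factor of length two occurs reversed: each `Yᵢ` is a
single letter, and an occurrence of `φ_{3k}` is a factor `X Y X` with `|Y| = 3k`. The markers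
force `3 ∣ |X|`, which pulls it back to a factor `X' Y' X'` of `d_k (v)` with `|Y'| = k`; since
`v` has no squares, and in particular no two equal adjacent letters, such a factor cannot fit
the blocks of length `k + 1` of `d_k (v)`.
-/

section Repetitions

variable {α : Type*}

/-- A square is the case `n = p`, an overlap the case `n = p + 1`, and a factor `X Y X` at `i`
the case `p = |X| + |Y|`, `n = |X|`. -/
def HasPeriodAt (s : ℕ → α) (i p n : ℕ) : Prop := ∀ j < n, s (i + j) = s (i + p + j)

def SeqSquareFree (s : ℕ → α) : Prop := ∀ i p, 0 < p → ¬ HasPeriodAt s i p p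

def SeqOverlapFree (s : ℕ → α) : Prop := ∀ i p, 0 < p → ¬ HasPeriodAt s i p (p + 1)

lemma SeqSquareFree.apply_ne_apply_succ {s : ℕ → α} (hs : SeqSquareFree s) (n : ℕ) :
    s n ≠ s (n + 1) := fun h => hs n 1 one_pos fun j hj => by
  obtain rfl : j = 0 := by omega
  exact h

end Repetitions

def thueMorse (n : ℕ) : Bool :=
  if n = 0 then false else if n % 2 = 1 then !thueMorse (n / 2) else thueMorse (n / 2)
decreasing_by all_goals omega

lemma thueMorse_two_mul (n : ℕ) : thueMorse (2 * n) = thueMorse n := by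
  rcases n with _ | n
  · rfl
  · rw [thueMorse]; simp [show (2 * (n + 1)) % 2 = 0 by omega]

lemma thueMorse_two_mul_add_one (n : ℕ) : thueMorse (2 * n + 1) = !thueMorse n := by
  rw [thueMorse]; simp [show (2 * n + 1) / 2 = n by omega]

lemma thueMorse_two_mul_ne (n : ℕ) : thueMorse (2 * n) ≠ thueMorse (2 * n + 1) := by
  rw [thueMorse_two_mul, thueMorse_two_mul_add_one]; simp

lemma thueMorse_not_three_eq (n : ℕ) :
    ¬ (thueMorse n = thueMorse (n + 1) ∧ thueMorse (n + 1) = thueMorse (n + 2)) := by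
  rintro ⟨h₁, h₂⟩
  rcases Nat.even_or_odd' n with ⟨a, rfl | rfl⟩
  · exact thueMorse_two_mul_ne a h₁
  · exact thueMorse_two_mul_ne (a + 1) h₂

lemma HasPeriodAt.thueMorse_half {i q : ℕ} (h : HasPeriodAt thueMorse i (2 * q) (2 * q + 1)) :
    HasPeriodAt thueMorse (i / 2) q (q + 1) := by
  intro j hj
  rcases Nat.even_or_odd' i with ⟨a, rfl | rfl⟩
  · rw [show 2 * a / 2 = a by omega]
    have := h (2 * j) (by omega)
    rwa [show 2 * a + 2 * j = 2 * (a + j) by ring,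
      show 2 * a + 2 * q + 2 * j = 2 * (a + q + j) by ring, thueMorse_two_mul,
      thueMorse_two_mul] at this
  · rw [show (2 * a + 1) / 2 = a by omega]
    have := h (2 * j) (by omega)
    rwa [show 2 * a + 1 + 2 * j = 2 * (a + j) + 1 by ring,
      show 2 * a + 1 + 2 * q + 2 * j = 2 * (a + q + j) + 1 by ring, thueMorse_two_mul_add_one,
      thueMorse_two_mul_add_one, Bool.not_inj_iff] at this

/-- An odd period `2h + 1` maps odd positions to even ones, and `thueMorse (2n + 1)` is the
negation of `thueMorse (2n)`; reading this on two consecutive pairs of positions gives three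
equal consecutive letters. -/
lemma thueMorse_not_hasPeriodAt_odd {i h : ℕ} (hh : 0 < h) :
    ¬ HasPeriodAt thueMorse i (2 * h + 1) (2 * h + 2) := by
  intro H
  have odd_start : ∀ a, i ≤ 2 * a + 1 → 2 * a + 2 ≤ i + 2 * h + 1 →
      thueMorse a = thueMorse (a + 1) := by
    intro a h₁ h₂
    have e₁ := H (2 * a + 1 - i) (by omega)
    have e₂ := H (2 * a + 2 - i) (by omega)
    rw [show i + (2 * a + 1 - i) = 2 * a + 1 by omega,
      show i + (2 * h + 1) + (2 * a + 1 - i) = 2 * (a + h + 1) by omega,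
      thueMorse_two_mul_add_one, thueMorse_two_mul] at e₁
    rw [show i + (2 * a + 2 - i) = 2 * (a + 1) by omega,
      show i + (2 * h + 1) + (2 * a + 2 - i) = 2 * (a + h + 1) + 1 by omega,
      thueMorse_two_mul_add_one, thueMorse_two_mul] at e₂
    rw [e₂, ← e₁, Bool.not_not]
  have even_start : ∀ a, i ≤ 2 * a → 2 * a + 1 ≤ i + 2 * h + 1 →
      thueMorse (a + h) = thueMorse (a + h + 1) := by
    intro a h₁ h₂
    have e₁ := H (2 * a - i) (by omega)
    have e₂ := H (2 * a + 1 - i) (by omega)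
    rw [show i + (2 * a - i) = 2 * a by omega,
      show i + (2 * h + 1) + (2 * a - i) = 2 * (a + h) + 1 by omega,
      thueMorse_two_mul_add_one, thueMorse_two_mul] at e₁
    rw [show i + (2 * a + 1 - i) = 2 * a + 1 by omega,
      show i + (2 * h + 1) + (2 * a + 1 - i) = 2 * (a + h + 1) by omega,
      thueMorse_two_mul_add_one, thueMorse_two_mul] at e₂
    rw [← e₂, e₁, Bool.not_not]
  rcases Nat.even_or_odd' i with ⟨a, rfl | rfl⟩
  · have := even_start (a + 1) (by omega) (by omega)
    rw [show a + 1 + h = a + h + 1 by ring] at this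
    exact thueMorse_not_three_eq (a + h) ⟨even_start a (by omega) (by omega), this⟩
  · exact thueMorse_not_three_eq a
      ⟨odd_start a (by omega) (by omega), odd_start (a + 1) (by omega) (by omega)⟩

theorem thueMorse_overlapFree : SeqOverlapFree thueMorse := by
  intro i p hp H
  induction p using Nat.strong_induction_on generalizing i with
  | _ p ih =>
    rcases Nat.even_or_odd' p with ⟨q, rfl | rfl⟩
    · exact ih q (by omega) (i / 2) (by omega) H.thueMorse_half
    · rcases Nat.eq_zero_or_pos q with rfl | hq
      · exact thueMorse_not_three_eq i ⟨H 0 (by omega), H 1 (by omega)⟩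
      · exact thueMorse_not_hasPeriodAt_odd hq H

def pairCode (t : ℕ → Bool) (n : ℕ) : Fin 3 :=
  if t n = t (n + 1) then 0 else if t n then 1 else 2

lemma pairCode_eq_iff {t : ℕ → Bool} {n m : ℕ} (h : pairCode t n = pairCode t m) :
    t n = t m ↔ t (n + 1) = t (m + 1) := by
  unfold pairCode at h
  cases h₁ : t n <;> cases h₂ : t (n + 1) <;> cases h₃ : t m <;> cases h₄ : t (m + 1) <;>
    simp_all

lemma pairCode_eq_of_ne {t : ℕ → Bool} {n m : ℕ} (h : pairCode t n = pairCode t m)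
    (hne : t n ≠ t m) : t n = t (n + 1) := by
  unfold pairCode at h
  cases h₁ : t n <;> cases h₂ : t (n + 1) <;> cases h₃ : t m <;> cases h₄ : t (m + 1) <;>
    simp_all

/-- A square of `pairCode t` either lifts to an overlap of `t`, or all its letters code
constant pairs, which makes `t` constant on three consecutive positions. -/
theorem SeqOverlapFree.seqSquareFree_pairCode {t : ℕ → Bool} (ht : SeqOverlapFree t) :
    SeqSquareFree (pairCode t) := by
  intro i p hp H
  have agree_iff : ∀ j ≤ p, (t (i + j) = t (i + p + j) ↔ t i = t (i + p)) := by
    intro j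
    induction j with
    | zero => simp
    | succ j ih =>
      intro hj
      rw [← ih (by omega), pairCode_eq_iff (H j (by omega))]
      rfl
  by_cases h₀ : t i = t (i + p)
  · exact ht i p hp fun j hj => (agree_iff j (by omega)).2 h₀
  · have flat : ∀ j ≤ p, t (i + j) = t (i + j + 1) := by
      intro j hj
      rcases hj.lt_or_eq with hj | rfl
      · exact pairCode_eq_of_ne (H j hj) (mt (agree_iff j hj.le).1 h₀)
      · exact pairCode_eq_of_ne (by simpa using (H 0 hp).symm) (Ne.symm h₀)
    refine ht i 1 one_pos fun j hj => ?_
    interval_cases j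
    exacts [flat 0 (by omega), flat 1 hp]

section Substitutions

variable {α : Type*}

/-- The sequence version of `dMorph k`. -/
def dSeq (k : ℕ) (s : ℕ → α) (c : ℕ) : α := s (c / (k + 1))

lemma HasPeriodAt.of_dSeq {s : ℕ → α} {k c p m n : ℕ} (hn : (k + 1) * (n - 1) < m)
    (h : HasPeriodAt (dSeq k s) c ((k + 1) * p) m) : HasPeriodAt s (c / (k + 1)) p n := by
  intro j hj
  have := h ((k + 1) * j) (by nlinarith [Nat.mul_le_mul_left (k + 1) (by omega : j ≤ n - 1)])
  unfold dSeq at this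
  rwa [Nat.add_mul_div_left _ _ (by omega), add_assoc, ← mul_add,
    Nat.add_mul_div_left _ _ (by omega), ← add_assoc] at this

/-- If the block boundary after position `c` were matched by none after `c + T`, the letters
on both sides of that boundary would be equal. -/
lemma dSeq_boundary {s : ℕ → α} (hs : SeqSquareFree s) {k c T : ℕ}
    (h₀ : dSeq k s c = dSeq k s (c + T)) (h₁ : dSeq k s (c + 1) = dSeq k s (c + T + 1))
    (hc : (k + 1) ∣ c + 1) : (k + 1) ∣ c + T + 1 := by
  by_contra hcT
  unfold dSeq at h₀ h₁
  rw [Nat.succ_div, if_pos hc, Nat.succ_div, if_neg hcT, add_zero, ← h₀] at h₁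
  exact hs.apply_ne_apply_succ _ h₁.symm

/-- If `k + 1` divides the period `m + k`, the repetition descends to a square of `s`;
otherwise either the first `m` positions lie in one block, whose letter then equals the
next block's, or they contain a block boundary that `dSeq_boundary` cannot match. -/
theorem SeqSquareFree.not_hasPeriodAt_dSeq {s : ℕ → α} (hs : SeqSquareFree s) (k : ℕ)
    {c m : ℕ} (hm : 0 < m) : ¬ HasPeriodAt (dSeq k s) c (m + k) m := by
  intro H
  have hcq := Nat.div_add_mod c (k + 1)
  set q := c / (k + 1)
  set r := c % (k + 1)
  have hr : r < k + 1 := Nat.mod_lt _ (by omega)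
  by_cases hT : (k + 1) ∣ m + k
  · obtain ⟨_ | L, hL⟩ := hT
    · omega
    rw [hL] at H
    refine hs _ (L + 1) L.succ_pos (H.of_dSeq ?_)
    rw [mul_add_one] at hL
    simp only [Nat.add_sub_cancel]
    omega
  by_cases hc : r + m ≤ k + 1
  · have h₀ := H 0 hm
    simp only [dSeq, add_zero] at h₀
    rw [Nat.div_eq_of_lt_le (m := c + (m + k)) (k := q + 1) (by nlinarith) (by nlinarith)] at h₀
    exact hs.apply_ne_apply_succ q h₀
  · have hj : (k - r) + 1 < m := by omega
    have hb : (k + 1) ∣ c + (k - r) + 1 := ⟨q + 1, by rw [mul_add_one]; omega⟩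
    have h₁ := H (k - r + 1) hj
    rw [← add_assoc, show c + (m + k) + (k - r + 1) = c + (k - r) + (m + k) + 1 by ring] at h₁
    have h₀ := H (k - r) (by omega)
    rw [add_right_comm c (m + k)] at h₀
    have := dSeq_boundary hs h₀ h₁ hb
    rw [add_right_comm] at this
    exact hT ((Nat.dvd_add_right hb).mp this)

end Substitutions

/-- The sequence version of `gMorph`. -/
def gSeq (s : ℕ → Fin 3) (i : ℕ) : Fin 5 :=
  if i % 3 = 0 then (s (i / 3)).castLE (by norm_num) else ⟨i % 3 + 2, by omega⟩

/-- Truncated subtraction sends all letters of `s` to `0`. -/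
lemma gSeq_val_sub_two (s : ℕ → Fin 3) (i : ℕ) : (gSeq s i).val - 2 = i % 3 := by
  unfold gSeq
  split_ifs with h
  · simp only [Fin.val_castLE]; omega
  · simp

lemma gSeq_three_mul (s : ℕ → Fin 3) (c : ℕ) : gSeq s (3 * c) = (s c).castLE (by norm_num) := by
  simp [gSeq]

lemma gSeq_not_swap (s : ℕ → Fin 3) (i j : ℕ) :
    ¬ (gSeq s i = gSeq s (j + 1) ∧ gSeq s (i + 1) = gSeq s j) := by
  rintro ⟨h₁, h₂⟩
  have e₁ := congrArg (fun x : Fin 5 => x.val - 2) h₁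
  have e₂ := congrArg (fun x : Fin 5 => x.val - 2) h₂
  simp only [gSeq_val_sub_two] at e₁ e₂
  omega

lemma HasPeriodAt.mod_three_gSeq {s : ℕ → Fin 3} {i p n : ℕ} (hn : 0 < n)
    (h : HasPeriodAt (gSeq s) i p n) : p % 3 = 0 := by
  have := congrArg (fun x : Fin 5 => x.val - 2) (h 0 hn)
  simp only [gSeq_val_sub_two] at this
  omega

lemma HasPeriodAt.of_gSeq {s : ℕ → Fin 3} {i p n : ℕ} (h : HasPeriodAt (gSeq s) i (3 * p) n) :
    HasPeriodAt s ((i + 2) / 3) p (n / 3) := by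
  intro j hj
  have := h (3 * ((i + 2) / 3 + j) - i) (by omega)
  rwa [show i + (3 * ((i + 2) / 3 + j) - i) = 3 * ((i + 2) / 3 + j) by omega,
    show i + 3 * p + (3 * ((i + 2) / 3 + j) - i) = 3 * ((i + 2) / 3 + p + j) by omega,
    gSeq_three_mul, gSeq_three_mul, Fin.castLE_inj] at this

theorem SeqSquareFree.not_hasPeriodAt_gSeq_dSeq {s : ℕ → Fin 3} (hs : SeqSquareFree s) (k : ℕ)
    {i n : ℕ} (hn : 0 < n) : ¬ HasPeriodAt (gSeq (dSeq k s)) i (n + 3 * k) n := by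
  intro h
  obtain ⟨m, rfl⟩ : 3 ∣ n := by have := h.mod_three_gSeq hn; omega
  rw [← mul_add] at h
  have := h.of_gSeq
  rw [Nat.mul_div_cancel_left m (by norm_num)] at this
  exact hs.not_hasPeriodAt_dSeq k (by omega) this

section Factors

variable {α : Type*}

lemma exists_getElem_eq_of_infix_map_range {s : ℕ → α} {l : List α} {N : ℕ}
    (h : l <:+: (List.range N).map s) : ∃ i, ∀ j (hj : j < l.length), l[j] = s (i + j) := by
  obtain ⟨i, hle, hi⟩ := List.infix_iff_getElem?.mp h
  refine ⟨i, fun j hj => ?_⟩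
  have := hi j hj
  rw [List.getElem?_map, List.getElem?_range (by simp at hle; omega)] at this
  simpa [add_comm] using this.symm

lemma exists_hasPeriodAt_of_infix_map_range {s : ℕ → α} {X Y : List α} {N : ℕ}
    (h : X ++ Y ++ X <:+: (List.range N).map s) :
    ∃ i, HasPeriodAt s i (X.length + Y.length) X.length := by
  obtain ⟨i, hi⟩ := exists_getElem_eq_of_infix_map_range h
  refine ⟨i, fun j hj => ?_⟩
  have e₁ := hi j (by simp; omega)
  have e₂ := hi (X.length + Y.length + j) (by simp; omega)
  rw [List.getElem_append_left (by simp; omega), List.getElem_append_left hj] at e₁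
  rw [List.getElem_append_right (by simp)] at e₂
  simp only [List.length_append, Nat.add_sub_cancel_left] at e₂
  rw [← e₁, add_assoc, ← e₂]

lemma length_le_one_of_infix_gSeq {s : ℕ → Fin 3} {Y : List (Fin 5)} {N : ℕ}
    (h : Y <:+: (List.range N).map (gSeq s)) (hr : Y.reverse <:+: (List.range N).map (gSeq s)) :
    Y.length ≤ 1 := by
  match Y, h, hr with
  | [], _, _ | [_], _, _ => simp
  | a :: b :: Y, h, hr =>
    obtain ⟨i, hi⟩ := exists_getElem_eq_of_infix_map_range
      ((List.prefix_append [a, b] Y).isInfix.trans h)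
    obtain ⟨j, hj⟩ := exists_getElem_eq_of_infix_map_range
      ((List.suffix_append Y.reverse [b, a]).isInfix.trans (by simpa using hr))
    exact absurd ⟨(hi 0 (by simp)).symm.trans (hj 1 (by simp)), (hi 1 (by simp)).symm.trans
      (by simpa using hj 0 (by simp))⟩ (gSeq_not_swap s i j)

end Factors

theorem SeqSquareFree.avoids_map_range_gSeq_dSeq {s : ℕ → Fin 3} (hs : SeqSquareFree s)
    (k N : ℕ) : Avoids (3 * k) ((List.range N).map (gSeq (dSeq k s))) := by
  rintro ⟨X, Ys, hlen, hX, hYs, hXYX, hrev⟩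
  have hY : ∀ Y ∈ Ys, Y.length = 1 := fun Y hY =>
    (length_le_one_of_infix_gSeq ((List.infix_of_mem_flatten hY).trans
      ((List.infix_append X _ X).trans hXYX)) (hrev Y hY)).antisymm
      (List.length_pos_iff.mpr (hYs Y hY))
  have hF : Ys.flatten.length = 3 * k := by
    rw [List.length_flatten, List.map_congr_left hY, List.map_const', List.sum_replicate, hlen,
      smul_eq_mul, mul_one]
  obtain ⟨i, hi⟩ := exists_hasPeriodAt_of_infix_map_range hXYX
  rw [hF] at hi
  exact hs.not_hasPeriodAt_gSeq_dSeq k (List.length_pos_iff.mpr hX) hi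

theorem phi_threeK_five_avoidable_general (k : ℕ) :
    {w : List (Fin 5) | Avoids (3 * k) w}.Infinite :=
  Set.infinite_of_injective_forall_mem
    (f := fun N => (List.range N).map (gSeq (dSeq k (pairCode thueMorse))))
    (fun a b h => by simpa using congrArg List.length h)
    (thueMorse_overlapFree.seqSquareFree_pairCode.avoids_map_range_gSeq_dSeq k)

/-- For every `k ≥ 1`, `φ_{3k}` is 5-avoidable: infinitely many finite
words over a 5-letter alphabet avoid `φ_{3k}`. -/
theorem phi_threeK_five_avoidable (k : ℕ) (hk : 1 ≤ k) :
    {w : List (Fin 5) | Avoids (3 * k) w}.Infinite :=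
  phi_threeK_five_avoidable_general k
end
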